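/- arXiv:hep-th/9404038 — 2 statements merged into one kernel-verified Lean document; each statement's English description precedes it below -/
import Mathlib

section
/- Every matrix coefficient of R⁺_{s,t}(z) and of R⁻_{s,t}(z) with respect to the basis (v_i ⊗ w_j) of M_s ⊗ M_t — that is, each of the formal power series in z appearing as the coefficient of v_a ⊗ w_b in R^±_{s,t}(z)(v_c ⊗ w_d) — is the Taylor expansion at z = 0 of a rational function of z. -/
noncomputable section

/-- The Verma module `M_s`: the ℂ-vector space with basis `(v_k)_{k∈ℕ}`,
modelled as finitely supported functions, `v_k = single k 1`. -/
abbrev VermaSpace : Type := ℕ →₀ ℂ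

/-- The tensor product `M_s ⊗ M_t`, with basis `v_i ⊗ w_j = single (i,j) 1`. -/
abbrev TensorSpace : Type := (ℕ × ℕ) →₀ ℂ

/-- The symmetric quantum integer `[n]_q = (q^n - q^{-n})/(q - q^{-1})`. -/
def qint (q : ℂ) (n : ℤ) : ℂ := (q ^ n - q ^ (-n)) / (q - q⁻¹)

/-- The `p`-integer `(m)_p = 1 + p + ⋯ + p^{m−1}`. -/
def pnum (p : ℂ) (m : ℕ) : ℂ := ∑ r ∈ Finset.range m, p ^ r

/-- The `p`-factorial `(m)_p! = (1)_p (2)_p ⋯ (m)_p`. -/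
def pfact (p : ℂ) (m : ℕ) : ℂ := ∏ i ∈ Finset.range m, pnum p (i + 1)

/-- `E v_k = [k]_q (s q^{1−k} − s^{−1} q^{k−1})/(q − q^{−1}) v_{k−1}` (and `E v_0 = 0`,
since `[0]_q = 0`). -/
def vermaE (q s : ℂ) : Module.End ℂ VermaSpace :=
  Finsupp.lsum ℂ fun k => LinearMap.toSpanSingleton ℂ VermaSpace
    ((qint q (k : ℤ) * ((s * q ^ (1 - (k : ℤ)) - s⁻¹ * q ^ ((k : ℤ) - 1)) / (q - q⁻¹))) •
      Finsupp.single (k - 1) 1)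

/-- `F v_k = v_{k+1}`. -/
def vermaF : Module.End ℂ VermaSpace :=
  Finsupp.lsum ℂ fun k => LinearMap.toSpanSingleton ℂ VermaSpace (Finsupp.single (k + 1) 1)

/-- `K v_k = s q^{−2k} v_k`. -/
def vermaK (q s : ℂ) : Module.End ℂ VermaSpace :=
  Finsupp.lsum ℂ fun k => LinearMap.toSpanSingleton ℂ VermaSpace
    ((s * q ^ (-2 * (k : ℤ))) • Finsupp.single k 1)

/-- `K⁻¹ v_k = s⁻¹ q^{2k} v_k`. -/
def vermaKinv (q s : ℂ) : Module.End ℂ VermaSpace :=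
  Finsupp.lsum ℂ fun k => LinearMap.toSpanSingleton ℂ VermaSpace
    ((s⁻¹ * q ^ (2 * (k : ℤ))) • Finsupp.single k 1)

/-- Outer product of two vectors, realizing `f ⊗ g` in the basis model of the
tensor product. -/
def outer (f g : VermaSpace) : TensorSpace :=
  f.sum fun i a => g.sum fun j b => Finsupp.single (i, j) (a * b)

/-- The tensor product `A ⊗ B` of two operators, in the basis model. -/
def tensEnd (A B : Module.End ℂ VermaSpace) : Module.End ℂ TensorSpace :=
  Finsupp.lsum ℂ fun ij => LinearMap.toSpanSingleton ℂ TensorSpace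
    (outer (A (Finsupp.single ij.1 1)) (B (Finsupp.single ij.2 1)))

/-- The operator `(K^{−n}E) ⊗ (F K^n)` on `M_s ⊗ M_t`. -/
def phiPlus (q s t : ℂ) (n : ℕ) : Module.End ℂ TensorSpace :=
  tensEnd ((vermaKinv q s) ^ n * vermaE q s) (vermaF * (vermaK q t) ^ n)

/-- The operator `(F K^{−n}) ⊗ (K^n E)` on `M_s ⊗ M_t`. -/
def phiMinus (q s t : ℂ) (n : ℕ) : Module.End ℂ TensorSpace :=
  tensEnd (vermaF * (vermaKinv q s) ^ n) ((vermaK q t) ^ n * vermaE q t)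

/-- The zero-mode factor `exp_p((q − q^{−1}) E ⊗ F)` with `p = q^{−2}`: since
`(E ⊗ F)^m (v_i ⊗ w_j) = 0` for `m > i`, the exponential series is a finite sum
on every basis vector. -/
def expFactorZero (q s t : ℂ) : Module.End ℂ TensorSpace :=
  Finsupp.lsum ℂ fun ij => LinearMap.toSpanSingleton ℂ TensorSpace
    ((∑ m ∈ Finset.range (ij.1 + 1),
        ((pfact ((q ^ 2)⁻¹) m)⁻¹ * (q - q⁻¹) ^ m) • (phiPlus q s t 0) ^ m)
      (Finsupp.single ij 1))

/-- The `n`-th factor `exp_p((q − q^{−1}) z^n (K^{−n}E) ⊗ (F K^n))` of `R⁺`,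
`p = q^{−2}`, as a power series in `z` with operator coefficients. -/
def factorPlus (q s t : ℂ) (n : ℕ) : PowerSeries (Module.End ℂ TensorSpace) :=
  if n = 0 then PowerSeries.C (expFactorZero q s t)
  else PowerSeries.mk fun d =>
    if n ∣ d then
      ((pfact ((q ^ 2)⁻¹) (d / n))⁻¹ * (q - q⁻¹) ^ (d / n)) • (phiPlus q s t n) ^ (d / n)
    else 0

/-- The `n`-th factor `exp_p((q − q^{−1}) z^n (F K^{−n}) ⊗ (K^n E))` of `R⁻`
(`n ≥ 1`), `p = q^{−2}`. -/
def factorMinus (q s t : ℂ) (n : ℕ) : PowerSeries (Module.End ℂ TensorSpace) :=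
  PowerSeries.mk fun d =>
    if n ∣ d then
      ((pfact ((q ^ 2)⁻¹) (d / n))⁻¹ * (q - q⁻¹) ^ (d / n)) • (phiMinus q s t n) ^ (d / n)
    else 0

/-- `R⁺_{s,t}(z) = ∏_{n≥0}^{→} exp_p((q−q^{−1}) z^n (K^{−n}E) ⊗ (F K^n))`, the
product taken left-to-right in increasing `n`; the `n`-th factor is `1 + O(z^n)`
for `n ≥ 1`, so the `z^d`-coefficient is that of the partial product over `n ≤ d`. -/
def rPlus (q s t : ℂ) : PowerSeries (Module.End ℂ TensorSpace) :=
  PowerSeries.mk fun d =>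
    PowerSeries.coeff d
      (((List.range (d + 1)).map (factorPlus q s t)).prod)

/-- `R⁻_{s,t}(z) = ∏_{n≥1}^{←} exp_p((q−q^{−1}) z^n (F K^{−n}) ⊗ (K^n E))`, the
product taken left-to-right in decreasing `n`; the `n`-th factor is `1 + O(z^n)`,
so the `z^d`-coefficient is that of the partial product over `1 ≤ n ≤ d + 1`. -/
def rMinus (q s t : ℂ) : PowerSeries (Module.End ℂ TensorSpace) :=
  PowerSeries.mk fun d =>
    PowerSeries.coeff d
      ((((List.range (d + 1)).map fun i => factorMinus q s t (i + 1)).reverse).prod)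

/-- A formal power series is the Taylor expansion at `0` of a rational function of `z`:
there are polynomials `f`, `g` with `g(0) ≠ 0` and `g · S = f`. -/
def IsRationalPS (S : PowerSeries ℂ) : Prop :=
  ∃ f g : Polynomial ℂ, g.coeff 0 ≠ 0 ∧ (g : PowerSeries ℂ) * S = (f : PowerSeries ℂ)

open Finsupp PowerSeries Finset

namespace GaussR

variable (q s t : ℂ)

/-- E-coefficient. -/
def eC (q s : ℂ) (k : ℕ) : ℂ :=
  qint q (k : ℤ) * ((s * q ^ (1 - (k : ℤ)) - s⁻¹ * q ^ ((k : ℤ) - 1)) / (q - q⁻¹))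

lemma eC_zero : eC q s 0 = 0 := by simp [eC, qint]

lemma vermaE_single (k : ℕ) :
    vermaE q s (Finsupp.single k 1) = eC q s k • Finsupp.single (k - 1) 1 := by
  simp [vermaE, Finsupp.lsum_single, LinearMap.toSpanSingleton_apply, eC]

lemma vermaF_single (k : ℕ) :
    vermaF (Finsupp.single k 1) = Finsupp.single (k + 1) 1 := by
  simp [vermaF, Finsupp.lsum_single, LinearMap.toSpanSingleton_apply]

lemma vermaK_pow_single (n k : ℕ) :
    ((vermaK q t) ^ n) (Finsupp.single k 1)
      = (t * q ^ (-2 * (k : ℤ))) ^ n • Finsupp.single k 1 := by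
  induction n with
  | zero => simp
  | succ n ih =>
      rw [pow_succ, Module.End.mul_apply,
        show vermaK q t (Finsupp.single k 1) = (t * q ^ (-2 * (k : ℤ))) • Finsupp.single k 1 by
          simp [vermaK, Finsupp.lsum_single, LinearMap.toSpanSingleton_apply],
        map_smul, ih, smul_smul, pow_succ]
      ring_nf

lemma vermaKinv_pow_single (n k : ℕ) :
    ((vermaKinv q s) ^ n) (Finsupp.single k 1)
      = (s⁻¹ * q ^ (2 * (k : ℤ))) ^ n • Finsupp.single k 1 := by
  induction n with
  | zero => simp
  | succ n ih =>
      rw [pow_succ, Module.End.mul_apply,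
        show vermaKinv q s (Finsupp.single k 1) = (s⁻¹ * q ^ (2 * (k : ℤ))) • Finsupp.single k 1 by
          simp [vermaKinv, Finsupp.lsum_single, LinearMap.toSpanSingleton_apply],
        map_smul, ih, smul_smul, pow_succ]
      ring_nf

lemma outer_single (i j : ℕ) (x y : ℂ) :
    outer (Finsupp.single i x) (Finsupp.single j y) = Finsupp.single (i, j) (x * y) := by
  classical
  unfold outer
  rw [Finsupp.sum_single_index (by rw [Finsupp.sum_single_index] <;> simp)]
  rw [Finsupp.sum_single_index (by simp)]

lemma tensEnd_single (A B : Module.End ℂ VermaSpace) (i j : ℕ) :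
    tensEnd A B (Finsupp.single (i, j) 1)
      = outer (A (Finsupp.single i 1)) (B (Finsupp.single j 1)) := by
  simp [tensEnd, Finsupp.lsum_single, LinearMap.toSpanSingleton_apply]

lemma outer_smul_left (x : ℂ) (f g : VermaSpace) : outer (x • f) g = x • outer f g := by
  classical
  unfold outer
  rw [Finsupp.sum_smul_index (by intro i; simp)]
  rw [Finsupp.smul_sum]
  refine Finsupp.sum_congr ?_
  intro i _
  rw [Finsupp.smul_sum]
  refine Finsupp.sum_congr ?_
  intro j _
  rw [Finsupp.smul_single, smul_eq_mul, mul_assoc]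

lemma outer_smul_right (y : ℂ) (f g : VermaSpace) : outer f (y • g) = y • outer f g := by
  classical
  unfold outer
  rw [Finsupp.smul_sum]
  refine Finsupp.sum_congr ?_
  intro i _
  rw [Finsupp.sum_smul_index (by intro j; simp)]
  rw [Finsupp.smul_sum]
  refine Finsupp.sum_congr ?_
  intro j _
  rw [Finsupp.smul_single, smul_eq_mul]
  congr 1
  ring

/-- scalar for `phiPlus`. -/
def aP (q s t : ℂ) (n i j : ℕ) : ℂ :=
  eC q s i * ((s⁻¹ * q ^ (2 * ((i - 1 : ℕ) : ℤ))) ^ n * (t * q ^ (-2 * (j : ℤ))) ^ n)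

/-- scalar for `phiMinus`. -/
def aM (q s t : ℂ) (n i j : ℕ) : ℂ :=
  (s⁻¹ * q ^ (2 * (i : ℤ))) ^ n * (eC q t j * (t * q ^ (-2 * ((j - 1 : ℕ) : ℤ))) ^ n)

lemma phiPlus_single (n i j : ℕ) :
    phiPlus q s t n (Finsupp.single (i, j) 1)
      = aP q s t n i j • Finsupp.single (i - 1, j + 1) 1 := by
  rw [phiPlus, tensEnd_single, Module.End.mul_apply, Module.End.mul_apply]
  rw [vermaE_single, map_smul, vermaKinv_pow_single, vermaK_pow_single, map_smul, vermaF_single]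
  rw [outer_smul_left, outer_smul_right, outer_smul_left, outer_single]
  rw [smul_smul, smul_smul, mul_one, aP]
  congr 1
  ring

lemma phiMinus_single (n i j : ℕ) :
    phiMinus q s t n (Finsupp.single (i, j) 1)
      = aM q s t n i j • Finsupp.single (i + 1, j - 1) 1 := by
  rw [phiMinus, tensEnd_single, Module.End.mul_apply, Module.End.mul_apply]
  rw [vermaKinv_pow_single, map_smul, vermaF_single, vermaE_single, map_smul,
    vermaK_pow_single]
  rw [outer_smul_left, outer_smul_right, outer_smul_right, outer_single]
  rw [smul_smul, smul_smul, mul_one, aM]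
  congr 1
  ring

end GaussR
namespace GaussR

variable (q s t : ℂ)

lemma phiPlus_pow_single (n E i j : ℕ) :
    ((phiPlus q s t n) ^ E) (Finsupp.single (i, j) 1)
      = (∏ k ∈ range E, aP q s t n (i - k) (j + k)) • Finsupp.single (i - E, j + E) 1 := by
  induction E generalizing i j with
  | zero => simp
  | succ E ih =>
      rw [pow_succ, Module.End.mul_apply, phiPlus_single, map_smul, ih, smul_smul]
      have hprod : ∏ k ∈ range (E+1), aP q s t n (i-k) (j+k)
          = aP q s t n i j * ∏ k ∈ range E, aP q s t n (i-1-k) (j+1+k) := by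
        rw [Finset.prod_range_succ', mul_comm]
        congr 1
        refine Finset.prod_congr rfl fun k _ => by
          rw [show i - (k+1) = i-1-k by omega, show j + (k+1) = j+1+k by omega]
      rw [hprod, show i-1-E = i-(E+1) by omega, show j+1+E = j+(E+1) by omega]

lemma phiMinus_pow_single (n E i j : ℕ) :
    ((phiMinus q s t n) ^ E) (Finsupp.single (i, j) 1)
      = (∏ k ∈ range E, aM q s t n (i + k) (j - k)) • Finsupp.single (i + E, j - E) 1 := by
  induction E generalizing i j with
  | zero => simp
  | succ E ih =>
      rw [pow_succ, Module.End.mul_apply, phiMinus_single, map_smul, ih, smul_smul]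
      have hprod : ∏ k ∈ range (E+1), aM q s t n (i+k) (j-k)
          = aM q s t n i j * ∏ k ∈ range E, aM q s t n (i+1+k) (j-1-k) := by
        rw [Finset.prod_range_succ', mul_comm]
        congr 1
        refine Finset.prod_congr rfl fun k _ => by
          rw [show i + (k+1) = i+1+k by omega, show j - (k+1) = j-1-k by omega]
      rw [hprod, show i+1+E = i+(E+1) by omega, show j-1-E = j-(E+1) by omega]

/-- scalar for powers in `factorPlus`. -/
def bP (q s t : ℂ) (n E i j : ℕ) : ℂ :=
  ((pfact ((q ^ 2)⁻¹) E)⁻¹ * (q - q⁻¹) ^ E) * ∏ k ∈ range E, aP q s t n (i - k) (j + k)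

def bM (q s t : ℂ) (n E i j : ℕ) : ℂ :=
  ((pfact ((q ^ 2)⁻¹) E)⁻¹ * (q - q⁻¹) ^ E) * ∏ k ∈ range E, aM q s t n (i + k) (j - k)

lemma bP_zero (n i j : ℕ) : bP q s t n 0 i j = 1 := by simp [bP, pfact]

lemma bM_zero (n i j : ℕ) : bM q s t n 0 i j = 1 := by simp [bM, pfact]

lemma prod_aP_zero {E i : ℕ} (h : i < E) (n j : ℕ) :
    ∏ k ∈ range E, aP q s t n (i - k) (j + k) = 0 := by
  refine Finset.prod_eq_zero (Finset.mem_range.2 h) ?_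
  have : i - i = 0 := by omega
  rw [this, aP, eC_zero, zero_mul]

lemma prod_aM_zero {E j : ℕ} (h : j < E) (n i : ℕ) :
    ∏ k ∈ range E, aM q s t n (i + k) (j - k) = 0 := by
  refine Finset.prod_eq_zero (Finset.mem_range.2 h) ?_
  have : j - j = 0 := by omega
  rw [this, aM, eC_zero, zero_mul, mul_zero]

lemma bP_big {E i : ℕ} (h : i < E) (n j : ℕ) : bP q s t n E i j = 0 := by
  rw [bP, prod_aP_zero q s t h, mul_zero]

lemma bM_big {E j : ℕ} (h : j < E) (n i : ℕ) : bM q s t n E i j = 0 := by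
  rw [bM, prod_aM_zero q s t h, mul_zero]

lemma expFactorZero_single (i j : ℕ) :
    expFactorZero q s t (Finsupp.single (i, j) 1)
      = ∑ E ∈ range (i + 1), bP q s t 0 E i j • Finsupp.single (i - E, j + E) 1 := by
  rw [expFactorZero, Finsupp.lsum_single, LinearMap.toSpanSingleton_apply, one_smul]
  rw [LinearMap.sum_apply]
  refine Finset.sum_congr rfl ?_
  intro E _
  rw [LinearMap.smul_apply, phiPlus_pow_single, smul_smul, bP]

/-- unified coefficient formula for `factorPlus`. -/
lemma factorPlus_coeff_single (n D i j : ℕ) :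
    (PowerSeries.coeff D (factorPlus q s t n)) (Finsupp.single (i, j) 1)
      = ∑ E ∈ range (i + 1),
          (if n * E = D then bP q s t n E i j else 0) • Finsupp.single (i - E, j + E) 1 := by
  rcases Nat.eq_zero_or_pos n with hn | hn
  · subst hn
    rw [factorPlus, if_pos rfl, PowerSeries.coeff_C]
    rcases eq_or_ne D 0 with hD | hD
    · subst hD
      rw [if_pos rfl, expFactorZero_single]
      refine Finset.sum_congr rfl ?_
      intro E _
      rw [if_pos (by omega)]
    · rw [if_neg hD]
      rw [eq_comm]
      refine Finset.sum_eq_zero ?_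
      intro E _
      rw [if_neg (by omega), zero_smul]
  · rw [factorPlus, if_neg (by omega), PowerSeries.coeff_mk]
    by_cases hdvd : n ∣ D
    · obtain ⟨M, rfl⟩ := hdvd
      have hM : n * M / n = M := Nat.mul_div_cancel_left M (by omega)
      rw [if_pos (dvd_mul_right n M), LinearMap.smul_apply, phiPlus_pow_single, smul_smul, hM]
      by_cases hle : M ≤ i
      · rw [Finset.sum_eq_single_of_mem M (Finset.mem_range.2 (by omega))]
        · rw [if_pos rfl, bP]
        · intro E _ hne
          rw [if_neg, zero_smul]
          intro hE
          exact hne (Nat.eq_of_mul_eq_mul_left (by omega) hE)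
      · rw [prod_aP_zero q s t (by omega), mul_zero, zero_smul, eq_comm]
        refine Finset.sum_eq_zero ?_
        intro E hE
        have hEi := Finset.mem_range.1 hE
        rw [if_neg, zero_smul]
        intro h
        have hEM : E = M := Nat.eq_of_mul_eq_mul_left (by omega) h
        omega
    · rw [if_neg hdvd, eq_comm, LinearMap.zero_apply]
      refine Finset.sum_eq_zero ?_
      intro E _
      rw [if_neg, zero_smul]
      intro h
      exact hdvd ⟨E, h.symm⟩

lemma factorMinus_coeff_single (n D i j : ℕ) (hn : 0 < n) :
    (PowerSeries.coeff D (factorMinus q s t n)) (Finsupp.single (i, j) 1)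
      = ∑ E ∈ range (j + 1),
          (if n * E = D then bM q s t n E i j else 0) • Finsupp.single (i + E, j - E) 1 := by
  rw [factorMinus, PowerSeries.coeff_mk]
  by_cases hdvd : n ∣ D
  · obtain ⟨M, rfl⟩ := hdvd
    have hM : n * M / n = M := Nat.mul_div_cancel_left M (by omega)
    rw [if_pos (dvd_mul_right n M), LinearMap.smul_apply, phiMinus_pow_single, smul_smul, hM]
    by_cases hle : M ≤ j
    · rw [Finset.sum_eq_single_of_mem M (Finset.mem_range.2 (by omega))]
      · rw [if_pos rfl, bM]
      · intro E _ hne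
        rw [if_neg, zero_smul]
        intro hE
        exact hne (Nat.eq_of_mul_eq_mul_left (by omega) hE)
    · rw [prod_aM_zero q s t (by omega), mul_zero, zero_smul, eq_comm]
      refine Finset.sum_eq_zero ?_
      intro E hE
      have hEj := Finset.mem_range.1 hE
      rw [if_neg, zero_smul]
      intro h
      have hEM : E = M := Nat.eq_of_mul_eq_mul_left (by omega) h
      omega
  · rw [if_neg hdvd, eq_comm, LinearMap.zero_apply]
    refine Finset.sum_eq_zero ?_
    intro E _
    rw [if_neg, zero_smul]
    intro h
    exact hdvd ⟨E, h.symm⟩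

end GaussR
namespace GaussR

lemma triangle_sum {M : Type*} [AddCommMonoid M] (n : ℕ) (c : ℕ → ℕ → M) :
    ∑ k ∈ range (n+1), ∑ k' ∈ range (n-k+1), c k k'
      = ∑ K ∈ range (n+1), ∑ k ∈ range (K+1), c k (K-k) := by
  induction n with
  | zero => simp
  | succ n ih =>
      have hsplit : ∀ k ∈ range (n+1),
          ∑ k' ∈ range (n+1-k+1), c k k' = (∑ k' ∈ range (n-k+1), c k k') + c k (n+1-k) := by
        intro k hk
        have hk' := Finset.mem_range.1 hk
        rw [show n+1-k+1 = (n-k+1)+1 by omega, Finset.sum_range_succ,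
          show n-k+1 = n+1-k by omega]
      rw [Finset.sum_range_succ]
      rw [Finset.sum_congr rfl hsplit, Finset.sum_add_distrib, ih]
      simp only [Finset.sum_range_succ, Nat.sub_self, Nat.add_sub_cancel_left,
        Finset.sum_range_zero, Nat.add_sub_cancel]
      abel

lemma eval_path_hit (f : ℕ → ℂ) (x : ℕ → ℕ × ℕ)
    (hinj : ∀ k k', x k = x k' → k = k') {K n : ℕ} (hK : K < n) :
    (∑ k ∈ range n, f k • Finsupp.single (x k) (1:ℂ)) (x K) = f K := by
  rw [Finset.sum_apply']
  rw [Finset.sum_eq_single_of_mem K (Finset.mem_range.2 hK)]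
  · simp [Finsupp.single_apply]
  · intro k _ hne
    rw [Finsupp.smul_apply, Finsupp.single_apply, if_neg, smul_zero]
    exact fun h => hne (hinj _ _ h)

lemma eval_path_miss (f : ℕ → ℂ) (x : ℕ → ℕ × ℕ) {n : ℕ} (y : ℕ × ℕ)
    (h : ∀ k, k < n → x k ≠ y) :
    (∑ k ∈ range n, f k • Finsupp.single (x k) (1:ℂ)) y = 0 := by
  rw [Finset.sum_apply']
  refine Finset.sum_eq_zero ?_
  intro k hk
  rw [Finsupp.smul_apply, Finsupp.single_apply, if_neg (h k (Finset.mem_range.1 hk)), smul_zero]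

/-- coefficients of `X` map each basis vector into the "lowering path", with
unitriangular diagonal. -/
def GoodP (X : PowerSeries (Module.End ℂ TensorSpace)) : Prop :=
  ∀ D i j : ℕ, ∃ f : ℕ → ℂ, f 0 = (if D = 0 then 1 else 0) ∧
    (PowerSeries.coeff D X) (Finsupp.single (i, j) 1)
      = ∑ k ∈ range (i + 1), f k • Finsupp.single (i - k, j + k) 1

def GoodM (X : PowerSeries (Module.End ℂ TensorSpace)) : Prop :=
  ∀ D i j : ℕ, ∃ f : ℕ → ℂ, f 0 = (if D = 0 then 1 else 0) ∧
    (PowerSeries.coeff D X) (Finsupp.single (i, j) 1)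
      = ∑ k ∈ range (j + 1), f k • Finsupp.single (i + k, j - k) 1

lemma goodP_one : GoodP 1 := by
  intro D i j
  refine ⟨fun k => if k = 0 then (if D = 0 then 1 else 0) else 0, by simp, ?_⟩
  rw [PowerSeries.coeff_one]
  rw [Finset.sum_eq_single_of_mem 0 (Finset.mem_range.2 (by omega))]
  · rcases eq_or_ne D 0 with h | h <;> simp [h]
  · intro k _ hk
    simp [hk]

lemma goodM_one : GoodM 1 := by
  intro D i j
  refine ⟨fun k => if k = 0 then (if D = 0 then 1 else 0) else 0, by simp, ?_⟩
  rw [PowerSeries.coeff_one]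
  rw [Finset.sum_eq_single_of_mem 0 (Finset.mem_range.2 (by omega))]
  · rcases eq_or_ne D 0 with h | h <;> simp [h]
  · intro k _ hk
    simp [hk]

variable (q s t : ℂ)

lemma goodP_factorPlus (n : ℕ) : GoodP (factorPlus q s t n) := by
  intro D i j
  refine ⟨fun E => if n * E = D then bP q s t n E i j else 0, ?_, factorPlus_coeff_single q s t n D i j⟩
  rcases eq_or_ne D 0 with h | h
  · subst h; simp [bP_zero]
  · simp [h, Ne.symm h, bP_zero]

lemma goodM_factorMinus (n : ℕ) (hn : 0 < n) : GoodM (factorMinus q s t n) := by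
  intro D i j
  refine ⟨fun E => if n * E = D then bM q s t n E i j else 0, ?_,
    factorMinus_coeff_single q s t n D i j hn⟩
  rcases eq_or_ne D 0 with h | h
  · subst h; simp [bM_zero]
  · simp [h, Ne.symm h, bM_zero]

lemma coeff_mul_apply (X Y : PowerSeries (Module.End ℂ TensorSpace)) (D : ℕ) (v : TensorSpace) :
    (PowerSeries.coeff D (X * Y)) v
      = ∑ e ∈ range (D + 1),
          (PowerSeries.coeff e X) ((PowerSeries.coeff (D - e) Y) v) := by
  rw [PowerSeries.coeff_mul, Finset.Nat.sum_antidiagonal_eq_sum_range_succ_mk]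
  rw [LinearMap.sum_apply]
  exact Finset.sum_congr rfl fun e _ => rfl

lemma goodP_mul {X Y : PowerSeries (Module.End ℂ TensorSpace)}
    (hX : GoodP X) (hY : GoodP Y) : GoodP (X * Y) := by
  choose fX hfX0 hfX using hX
  choose fY hfY0 hfY using hY
  intro D i j
  refine ⟨fun K => ∑ e ∈ range (D+1), ∑ k ∈ range (K+1),
      fY (D-e) i j k * fX e (i-k) (j+k) (K-k), ?_, ?_⟩
  · rcases eq_or_ne D 0 with h | h
    · subst h; simp [hfY0, hfX0]
    · rw [if_neg h]
      refine Finset.sum_eq_zero ?_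
      intro e he
      have he' := Finset.mem_range.1 he
      rw [Finset.sum_range_one, hfY0, hfX0]
      rcases eq_or_ne e 0 with h0 | h0
      · subst h0; simp only [Nat.sub_zero, if_neg h]; ring
      · simp only [if_neg h0]; ring
  · rw [coeff_mul_apply]
    have step : ∀ e ∈ range (D+1),
        (PowerSeries.coeff e X) ((PowerSeries.coeff (D - e) Y) (Finsupp.single (i, j) 1))
          = ∑ K ∈ range (i+1), (∑ k ∈ range (K+1),
              fY (D-e) i j k * fX e (i-k) (j+k) (K-k)) • Finsupp.single (i-K, j+K) 1 := by
      intro e _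
      rw [hfY (D-e) i j, map_sum]
      have inner : ∀ k, (PowerSeries.coeff e X) (fY (D-e) i j k • Finsupp.single (i-k, j+k) 1)
          = ∑ k' ∈ range (i-k+1),
              (fY (D-e) i j k * fX e (i-k) (j+k) k') • Finsupp.single (i-(k+k'), j+(k+k')) 1 := by
        intro k
        rw [map_smul, hfX e (i-k) (j+k), Finset.smul_sum]
        refine Finset.sum_congr rfl fun k' _ => by
          rw [smul_smul, show i-k-k' = i-(k+k') by omega, show j+k+k' = j+(k+k') by omega]
      calc (∑ k ∈ range (i+1), (PowerSeries.coeff e X)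
              (fY (D-e) i j k • Finsupp.single (i-k, j+k) 1))
          = ∑ k ∈ range (i+1), ∑ k' ∈ range (i-k+1),
              (fY (D-e) i j k * fX e (i-k) (j+k) k') • Finsupp.single (i-(k+k'), j+(k+k')) 1 :=
            Finset.sum_congr rfl fun k _ => inner k
        _ = ∑ K ∈ range (i+1), ∑ k ∈ range (K+1),
              (fY (D-e) i j k * fX e (i-k) (j+k) (K-k)) • Finsupp.single (i-(k+(K-k)), j+(k+(K-k))) 1 :=
            triangle_sum i _
        _ = ∑ K ∈ range (i+1), (∑ k ∈ range (K+1),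
              fY (D-e) i j k * fX e (i-k) (j+k) (K-k)) • Finsupp.single (i-K, j+K) 1 := by
            refine Finset.sum_congr rfl fun K _ => ?_
            rw [Finset.sum_smul]
            refine Finset.sum_congr rfl fun k hk => ?_
            have hk' := Finset.mem_range.1 hk
            rw [show k + (K-k) = K by omega]
    rw [Finset.sum_congr rfl step, Finset.sum_comm]
    refine Finset.sum_congr rfl fun K _ => ?_
    rw [Finset.sum_smul]

lemma goodM_mul {X Y : PowerSeries (Module.End ℂ TensorSpace)}
    (hX : GoodM X) (hY : GoodM Y) : GoodM (X * Y) := by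
  choose fX hfX0 hfX using hX
  choose fY hfY0 hfY using hY
  intro D i j
  refine ⟨fun K => ∑ e ∈ range (D+1), ∑ k ∈ range (K+1),
      fY (D-e) i j k * fX e (i+k) (j-k) (K-k), ?_, ?_⟩
  · rcases eq_or_ne D 0 with h | h
    · subst h; simp [hfY0, hfX0]
    · rw [if_neg h]
      refine Finset.sum_eq_zero ?_
      intro e he
      have he' := Finset.mem_range.1 he
      rw [Finset.sum_range_one, hfY0, hfX0]
      rcases eq_or_ne e 0 with h0 | h0
      · subst h0; simp only [Nat.sub_zero, if_neg h]; ring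
      · simp only [if_neg h0]; ring
  · rw [coeff_mul_apply]
    have step : ∀ e ∈ range (D+1),
        (PowerSeries.coeff e X) ((PowerSeries.coeff (D - e) Y) (Finsupp.single (i, j) 1))
          = ∑ K ∈ range (j+1), (∑ k ∈ range (K+1),
              fY (D-e) i j k * fX e (i+k) (j-k) (K-k)) • Finsupp.single (i+K, j-K) 1 := by
      intro e _
      rw [hfY (D-e) i j, map_sum]
      have inner : ∀ k, (PowerSeries.coeff e X) (fY (D-e) i j k • Finsupp.single (i+k, j-k) 1)
          = ∑ k' ∈ range (j-k+1),
              (fY (D-e) i j k * fX e (i+k) (j-k) k') • Finsupp.single (i+(k+k'), j-(k+k')) 1 := by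
        intro k
        rw [map_smul, hfX e (i+k) (j-k), Finset.smul_sum]
        refine Finset.sum_congr rfl fun k' _ => by
          rw [smul_smul, show i+k+k' = i+(k+k') by omega, show j-k-k' = j-(k+k') by omega]
      calc (∑ k ∈ range (j+1), (PowerSeries.coeff e X)
              (fY (D-e) i j k • Finsupp.single (i+k, j-k) 1))
          = ∑ k ∈ range (j+1), ∑ k' ∈ range (j-k+1),
              (fY (D-e) i j k * fX e (i+k) (j-k) k') • Finsupp.single (i+(k+k'), j-(k+k')) 1 :=
            Finset.sum_congr rfl fun k _ => inner k
        _ = ∑ K ∈ range (j+1), ∑ k ∈ range (K+1),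
              (fY (D-e) i j k * fX e (i+k) (j-k) (K-k)) • Finsupp.single (i+(k+(K-k)), j-(k+(K-k))) 1 :=
            triangle_sum j _
        _ = ∑ K ∈ range (j+1), (∑ k ∈ range (K+1),
              fY (D-e) i j k * fX e (i+k) (j-k) (K-k)) • Finsupp.single (i+K, j-K) 1 := by
            refine Finset.sum_congr rfl fun K _ => ?_
            rw [Finset.sum_smul]
            refine Finset.sum_congr rfl fun k hk => ?_
            have hk' := Finset.mem_range.1 hk
            rw [show k + (K-k) = K by omega]
    rw [Finset.sum_congr rfl step, Finset.sum_comm]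
    refine Finset.sum_congr rfl fun K _ => ?_
    rw [Finset.sum_smul]

lemma goodP_list_prod (l : List (PowerSeries (Module.End ℂ TensorSpace)))
    (h : ∀ X ∈ l, GoodP X) : GoodP l.prod := by
  induction l with
  | nil => exact goodP_one
  | cons X l ih =>
      rw [List.prod_cons]
      exact goodP_mul (h X (by simp)) (ih fun Y hY => h Y (by simp [hY]))

lemma goodM_list_prod (l : List (PowerSeries (Module.End ℂ TensorSpace)))
    (h : ∀ X ∈ l, GoodM X) : GoodM l.prod := by
  induction l with
  | nil => exact goodM_one
  | cons X l ih =>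
      rw [List.prod_cons]
      exact goodM_mul (h X (by simp)) (ih fun Y hY => h Y (by simp [hY]))

end GaussR
namespace GaussR

variable (q s t : ℂ)

def wP (q s t : ℂ) (i j : ℕ) : ℂ :=
  (s⁻¹ * q ^ (2 * ((i - 1 : ℕ) : ℤ))) * (t * q ^ (-2 * (j : ℤ)))

def wM (q s t : ℂ) (i j : ℕ) : ℂ :=
  (s⁻¹ * q ^ (2 * (i : ℤ))) * (t * q ^ (-2 * ((j - 1 : ℕ) : ℤ)))

lemma aP_succ (n i j : ℕ) : aP q s t (n+1) i j = aP q s t n i j * wP q s t i j := by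
  rw [aP, aP, wP, pow_succ, pow_succ]; ring

lemma aM_succ (n i j : ℕ) : aM q s t (n+1) i j = aM q s t n i j * wM q s t i j := by
  rw [aM, aM, wM, pow_succ, pow_succ]; ring

def gamP (q s t : ℂ) (i j : ℕ) : ℂ := (s⁻¹ * t) ^ i * q ^ (-2 * (i : ℤ) * (j : ℤ))

def gamM (q s t : ℂ) (i j : ℕ) : ℂ := (s⁻¹ * t) ^ j * q ^ (2 * (i : ℤ) * (j : ℤ))

lemma gamP_ne_zero (hq : q ≠ 0) (hs : s ≠ 0) (ht : t ≠ 0) (i j : ℕ) :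
    gamP q s t i j ≠ 0 := by
  apply mul_ne_zero
  · exact pow_ne_zero _ (mul_ne_zero (inv_ne_zero hs) ht)
  · exact zpow_ne_zero _ hq

lemma gamM_ne_zero (hq : q ≠ 0) (hs : s ≠ 0) (ht : t ≠ 0) (i j : ℕ) :
    gamM q s t i j ≠ 0 := by
  apply mul_ne_zero
  · exact pow_ne_zero _ (mul_ne_zero (inv_ne_zero hs) ht)
  · exact zpow_ne_zero _ hq

lemma gamP_step (hq : q ≠ 0) {i : ℕ} (hi : 1 ≤ i) (j : ℕ) :
    gamP q s t (i-1) (j+1) * wP q s t i j = gamP q s t i j := by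
  obtain ⟨i', rfl⟩ : ∃ i', i = i' + 1 := ⟨i - 1, by omega⟩
  simp only [Nat.add_sub_cancel, gamP, wP]
  rw [show (-2 * ((i'+1 : ℕ) : ℤ) * (j : ℤ))
      = (-2 * (i' : ℤ) * (((j+1 : ℕ)) : ℤ)) + (2 * (i' : ℤ)) + (-2 * (j : ℤ)) by push_cast; ring]
  rw [zpow_add₀ hq, zpow_add₀ hq, pow_succ]
  ring

lemma gamM_step (hq : q ≠ 0) (i : ℕ) {j : ℕ} (hj : 1 ≤ j) :
    gamM q s t (i+1) (j-1) * wM q s t i j = gamM q s t i j := by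
  obtain ⟨j', rfl⟩ : ∃ j', j = j' + 1 := ⟨j - 1, by omega⟩
  simp only [Nat.add_sub_cancel, gamM, wM]
  rw [show (2 * (i : ℤ) * ((j'+1 : ℕ) : ℤ))
      = (2 * (((i+1 : ℕ)) : ℤ) * ((j' : ℕ) : ℤ)) + (2 * (i : ℤ)) + (-2 * (j' : ℤ)) by push_cast; ring]
  rw [zpow_add₀ hq, zpow_add₀ hq, pow_succ]
  ring

lemma gamP_tele (hq : q ≠ 0) {E i : ℕ} (hE : E ≤ i) (j : ℕ) :
    gamP q s t (i-E) (j+E) * ∏ k ∈ range E, wP q s t (i-k) (j+k) = gamP q s t i j := by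
  induction E with
  | zero => simp
  | succ E ih =>
      rw [Finset.prod_range_succ]
      calc gamP q s t (i-(E+1)) (j+(E+1))
            * ((∏ k ∈ range E, wP q s t (i-k) (j+k)) * wP q s t (i-E) (j+E))
          = (gamP q s t ((i-E)-1) ((j+E)+1) * wP q s t (i-E) (j+E))
              * ∏ k ∈ range E, wP q s t (i-k) (j+k) := by
            rw [show i-(E+1) = (i-E)-1 by omega, show j+(E+1) = (j+E)+1 by omega]; ring
        _ = gamP q s t (i-E) (j+E) * ∏ k ∈ range E, wP q s t (i-k) (j+k) := by
            rw [gamP_step q s t hq (by omega)]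
        _ = gamP q s t i j := ih (by omega)

lemma gamM_tele (hq : q ≠ 0) {E j : ℕ} (hE : E ≤ j) (i : ℕ) :
    gamM q s t (i+E) (j-E) * ∏ k ∈ range E, wM q s t (i+k) (j-k) = gamM q s t i j := by
  induction E with
  | zero => simp
  | succ E ih =>
      rw [Finset.prod_range_succ]
      calc gamM q s t (i+(E+1)) (j-(E+1))
            * ((∏ k ∈ range E, wM q s t (i+k) (j-k)) * wM q s t (i+E) (j-E))
          = (gamM q s t ((i+E)+1) ((j-E)-1) * wM q s t (i+E) (j-E))
              * ∏ k ∈ range E, wM q s t (i+k) (j-k) := by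
            rw [show i+(E+1) = (i+E)+1 by omega, show j-(E+1) = (j-E)-1 by omega]; ring
        _ = gamM q s t (i+E) (j-E) * ∏ k ∈ range E, wM q s t (i+k) (j-k) := by
            rw [gamM_step q s t hq _ (by omega)]
        _ = gamM q s t i j := ih (by omega)

lemma bP_gam (hq : q ≠ 0) {E i : ℕ} (hE : E ≤ i) (n j : ℕ) :
    gamP q s t (i-E) (j+E) * bP q s t (n+1) E i j = gamP q s t i j * bP q s t n E i j := by
  rw [bP, bP]
  rw [Finset.prod_congr rfl fun k _ => aP_succ q s t n (i-k) (j+k), Finset.prod_mul_distrib]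
  calc gamP q s t (i-E) (j+E) * ((pfact ((q ^ 2)⁻¹) E)⁻¹ * (q - q⁻¹) ^ E
          * ((∏ k ∈ range E, aP q s t n (i-k) (j+k)) * ∏ k ∈ range E, wP q s t (i-k) (j+k)))
      = ((pfact ((q ^ 2)⁻¹) E)⁻¹ * (q - q⁻¹) ^ E * ∏ k ∈ range E, aP q s t n (i-k) (j+k))
          * (gamP q s t (i-E) (j+E) * ∏ k ∈ range E, wP q s t (i-k) (j+k)) := by ring
    _ = ((pfact ((q ^ 2)⁻¹) E)⁻¹ * (q - q⁻¹) ^ E * ∏ k ∈ range E, aP q s t n (i-k) (j+k))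
          * gamP q s t i j := by rw [gamP_tele q s t hq hE]
    _ = _ := by ring

lemma bM_gam (hq : q ≠ 0) {E j : ℕ} (hE : E ≤ j) (n i : ℕ) :
    gamM q s t (i+E) (j-E) * bM q s t (n+1) E i j = gamM q s t i j * bM q s t n E i j := by
  rw [bM, bM]
  rw [Finset.prod_congr rfl fun k _ => aM_succ q s t n (i+k) (j-k), Finset.prod_mul_distrib]
  calc gamM q s t (i+E) (j-E) * ((pfact ((q ^ 2)⁻¹) E)⁻¹ * (q - q⁻¹) ^ E
          * ((∏ k ∈ range E, aM q s t n (i+k) (j-k)) * ∏ k ∈ range E, wM q s t (i+k) (j-k)))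
      = ((pfact ((q ^ 2)⁻¹) E)⁻¹ * (q - q⁻¹) ^ E * ∏ k ∈ range E, aM q s t n (i+k) (j-k))
          * (gamM q s t (i+E) (j-E) * ∏ k ∈ range E, wM q s t (i+k) (j-k)) := by ring
    _ = ((pfact ((q ^ 2)⁻¹) E)⁻¹ * (q - q⁻¹) ^ E * ∏ k ∈ range E, aM q s t n (i+k) (j-k))
          * gamM q s t i j := by rw [gamM_tele q s t hq hE]
    _ = _ := by ring

/-- the diagonal operator of `Γ⁺` in degree `e`. -/
def gOpP (q s t : ℂ) (e : ℕ) : Module.End ℂ TensorSpace :=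
  Finsupp.lsum ℂ fun ij => LinearMap.toSpanSingleton ℂ TensorSpace
    (if ij.1 = e then gamP q s t ij.1 ij.2 • Finsupp.single ij 1 else 0)

def gOpM (q s t : ℂ) (e : ℕ) : Module.End ℂ TensorSpace :=
  Finsupp.lsum ℂ fun ij => LinearMap.toSpanSingleton ℂ TensorSpace
    (if ij.2 = e then gamM q s t ij.1 ij.2 • Finsupp.single ij 1 else 0)

def GamPS (q s t : ℂ) : PowerSeries (Module.End ℂ TensorSpace) := PowerSeries.mk (gOpP q s t)

def GamMS (q s t : ℂ) : PowerSeries (Module.End ℂ TensorSpace) := PowerSeries.mk (gOpM q s t)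

lemma gOpP_single (e i j : ℕ) :
    gOpP q s t e (Finsupp.single (i, j) 1)
      = if i = e then gamP q s t i j • Finsupp.single (i, j) 1 else 0 := by
  rw [gOpP, Finsupp.lsum_single, LinearMap.toSpanSingleton_apply, one_smul]

lemma gOpM_single (e i j : ℕ) :
    gOpM q s t e (Finsupp.single (i, j) 1)
      = if j = e then gamM q s t i j • Finsupp.single (i, j) 1 else 0 := by
  rw [gOpM, Finsupp.lsum_single, LinearMap.toSpanSingleton_apply, one_smul]

lemma end_ext {A B : Module.End ℂ TensorSpace}
    (h : ∀ ij : ℕ × ℕ, A (Finsupp.single ij 1) = B (Finsupp.single ij 1)) : A = B := by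
  refine Finsupp.lhom_ext ?_
  intro a b
  have hb : (Finsupp.single a b : TensorSpace) = b • Finsupp.single a 1 := by
    rw [Finsupp.smul_single, smul_eq_mul, mul_one]
  rw [hb, map_smul, map_smul, h]

lemma conjP (hq : q ≠ 0) (n : ℕ) :
    GamPS q s t * factorPlus q s t (n+1) = factorPlus q s t n * GamPS q s t := by
  refine PowerSeries.ext fun D => end_ext fun ⟨i, j⟩ => ?_
  rw [coeff_mul_apply, coeff_mul_apply]
  have hL : ∀ e ∈ range (D+1),
      (PowerSeries.coeff e (GamPS q s t))
          ((PowerSeries.coeff (D-e) (factorPlus q s t (n+1))) (Finsupp.single (i, j) 1))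
        = ∑ E ∈ range (i+1), (if ((n+1)*E = D-e ∧ i-E = e)
            then gamP q s t (i-E) (j+E) * bP q s t (n+1) E i j else 0)
              • Finsupp.single (i-E, j+E) 1 := by
    intro e _
    rw [GamPS, PowerSeries.coeff_mk, factorPlus_coeff_single, map_sum]
    refine Finset.sum_congr rfl fun E _ => ?_
    rw [map_smul, gOpP_single]
    by_cases h1 : (n+1)*E = D-e
    · by_cases h2 : i-E = e
      · rw [if_pos h1, if_pos h2, if_pos ⟨h1, h2⟩, smul_smul,
          mul_comm (bP q s t (n+1) E i j)]
      · rw [if_pos h1, if_neg h2, smul_zero, if_neg (by tauto), zero_smul]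
    · rw [if_neg h1, zero_smul, if_neg (by tauto), zero_smul]
  have hR : ∀ e ∈ range (D+1),
      (PowerSeries.coeff e (factorPlus q s t n))
          ((PowerSeries.coeff (D-e) (GamPS q s t)) (Finsupp.single (i, j) 1))
        = ∑ E ∈ range (i+1), (if (n*E = e ∧ i = D-e)
            then gamP q s t i j * bP q s t n E i j else 0)
              • Finsupp.single (i-E, j+E) 1 := by
    intro e _
    rw [GamPS, PowerSeries.coeff_mk, gOpP_single]
    by_cases h2 : i = D-e
    · rw [if_pos h2, map_smul, factorPlus_coeff_single, Finset.smul_sum]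
      refine Finset.sum_congr rfl fun E _ => ?_
      by_cases h1 : n*E = e
      · rw [if_pos h1, if_pos ⟨h1, h2⟩, smul_smul]
      · rw [if_neg h1, zero_smul, smul_zero, if_neg (by tauto), zero_smul]
    · rw [if_neg h2, map_zero, eq_comm]
      exact Finset.sum_eq_zero fun E _ => by rw [if_neg (fun h => h2 h.2), zero_smul]
  rw [Finset.sum_congr rfl hL, Finset.sum_congr rfl hR, Finset.sum_comm, Finset.sum_comm (s := range (D+1))]
  refine Finset.sum_congr rfl fun E hE => ?_
  have hEi := Finset.mem_range.1 hE
  have hmul : (n+1)*E = n*E + E := by ring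
  by_cases hD : i + n*E = D
  · rw [Finset.sum_eq_single_of_mem (i-E) (Finset.mem_range.2 (by omega))]
    · rw [Finset.sum_eq_single_of_mem (n*E) (Finset.mem_range.2 (by omega))]
      · rw [if_pos ⟨by omega, rfl⟩, if_pos ⟨rfl, by omega⟩, bP_gam q s t hq (by omega)]
      · intro e _ hne
        rw [if_neg (fun h => hne h.1.symm), zero_smul]
    · intro e _ hne
      rw [if_neg (fun h => hne h.2.symm), zero_smul]
  · rw [Finset.sum_eq_zero, Finset.sum_eq_zero]
    · intro e he
      have := Finset.mem_range.1 he
      rw [if_neg (fun h => hD (by omega)), zero_smul]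
    · intro e he
      have := Finset.mem_range.1 he
      rw [if_neg (fun h => hD (by omega)), zero_smul]

lemma conjM (hq : q ≠ 0) {n : ℕ} (hn : 0 < n) :
    GamMS q s t * factorMinus q s t (n+1) = factorMinus q s t n * GamMS q s t := by
  refine PowerSeries.ext fun D => end_ext fun ⟨i, j⟩ => ?_
  rw [coeff_mul_apply, coeff_mul_apply]
  have hL : ∀ e ∈ range (D+1),
      (PowerSeries.coeff e (GamMS q s t))
          ((PowerSeries.coeff (D-e) (factorMinus q s t (n+1))) (Finsupp.single (i, j) 1))
        = ∑ E ∈ range (j+1), (if ((n+1)*E = D-e ∧ j-E = e)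
            then gamM q s t (i+E) (j-E) * bM q s t (n+1) E i j else 0)
              • Finsupp.single (i+E, j-E) 1 := by
    intro e _
    rw [GamMS, PowerSeries.coeff_mk, factorMinus_coeff_single q s t _ _ _ _ (by omega), map_sum]
    refine Finset.sum_congr rfl fun E _ => ?_
    rw [map_smul, gOpM_single]
    by_cases h1 : (n+1)*E = D-e
    · by_cases h2 : j-E = e
      · rw [if_pos h1, if_pos h2, if_pos ⟨h1, h2⟩, smul_smul,
          mul_comm (bM q s t (n+1) E i j)]
      · rw [if_pos h1, if_neg h2, smul_zero, if_neg (by tauto), zero_smul]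
    · rw [if_neg h1, zero_smul, if_neg (by tauto), zero_smul]
  have hR : ∀ e ∈ range (D+1),
      (PowerSeries.coeff e (factorMinus q s t n))
          ((PowerSeries.coeff (D-e) (GamMS q s t)) (Finsupp.single (i, j) 1))
        = ∑ E ∈ range (j+1), (if (n*E = e ∧ j = D-e)
            then gamM q s t i j * bM q s t n E i j else 0)
              • Finsupp.single (i+E, j-E) 1 := by
    intro e _
    rw [GamMS, PowerSeries.coeff_mk, gOpM_single]
    by_cases h2 : j = D-e
    · rw [if_pos h2, map_smul, factorMinus_coeff_single q s t _ _ _ _ hn, Finset.smul_sum]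
      refine Finset.sum_congr rfl fun E _ => ?_
      by_cases h1 : n*E = e
      · rw [if_pos h1, if_pos ⟨h1, h2⟩, smul_smul]
      · rw [if_neg h1, zero_smul, smul_zero, if_neg (by tauto), zero_smul]
    · rw [if_neg h2, map_zero, eq_comm]
      exact Finset.sum_eq_zero fun E _ => by rw [if_neg (fun h => h2 h.2), zero_smul]
  rw [Finset.sum_congr rfl hL, Finset.sum_congr rfl hR, Finset.sum_comm, Finset.sum_comm (s := range (D+1))]
  refine Finset.sum_congr rfl fun E hE => ?_
  have hEj := Finset.mem_range.1 hE
  have hmul : (n+1)*E = n*E + E := by ring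
  by_cases hD : j + n*E = D
  · rw [Finset.sum_eq_single_of_mem (j-E) (Finset.mem_range.2 (by omega))]
    · rw [Finset.sum_eq_single_of_mem (n*E) (Finset.mem_range.2 (by omega))]
      · rw [if_pos ⟨by omega, rfl⟩, if_pos ⟨rfl, by omega⟩, bM_gam q s t hq (by omega)]
      · intro e _ hne
        rw [if_neg (fun h => hne h.1.symm), zero_smul]
    · intro e _ hne
      rw [if_neg (fun h => hne h.2.symm), zero_smul]
  · rw [Finset.sum_eq_zero, Finset.sum_eq_zero]
    · intro e he
      have := Finset.mem_range.1 he
      rw [if_neg (fun h => hD (by omega)), zero_smul]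
    · intro e he
      have := Finset.mem_range.1 he
      rw [if_neg (fun h => hD (by omega)), zero_smul]

end GaussR
namespace GaussR

variable (q s t : ℂ)

def pP (q s t : ℂ) (N : ℕ) : PowerSeries (Module.End ℂ TensorSpace) :=
  ((List.range N).map (factorPlus q s t)).prod

def qQ (q s t : ℂ) (N : ℕ) : PowerSeries (Module.End ℂ TensorSpace) :=
  ((List.range N).map (fun i => factorPlus q s t (i+1))).prod

def mP (q s t : ℂ) (N : ℕ) : PowerSeries (Module.End ℂ TensorSpace) :=
  (((List.range N).map fun i => factorMinus q s t (i+1)).reverse).prod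

def qM (q s t : ℂ) (N : ℕ) : PowerSeries (Module.End ℂ TensorSpace) :=
  (((List.range N).map fun i => factorMinus q s t (i+2)).reverse).prod

lemma pP_succ (N : ℕ) : pP q s t (N+1) = pP q s t N * factorPlus q s t N := by
  rw [pP, pP, List.range_succ, List.map_append, List.prod_append]
  simp

lemma qQ_succ (N : ℕ) : qQ q s t (N+1) = qQ q s t N * factorPlus q s t (N+1) := by
  rw [qQ, qQ, List.range_succ, List.map_append, List.prod_append]
  simp

lemma mP_succ (N : ℕ) : mP q s t (N+1) = factorMinus q s t (N+1) * mP q s t N := by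
  rw [mP, mP, List.range_succ, List.map_append, List.reverse_append, List.prod_append]
  simp

lemma qM_succ (N : ℕ) : qM q s t (N+1) = factorMinus q s t (N+2) * qM q s t N := by
  rw [qM, qM, List.range_succ, List.map_append, List.reverse_append, List.prod_append]
  simp

lemma pP_decomp (N : ℕ) :
    pP q s t (N+1) = PowerSeries.C (expFactorZero q s t) * qQ q s t N := by
  rw [pP, qQ, List.range_succ_eq_map, List.map_cons, List.prod_cons, List.map_map]
  rw [show factorPlus q s t 0 = PowerSeries.C (expFactorZero q s t) by rw [factorPlus, if_pos rfl]]
  rfl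

lemma mP_decomp (N : ℕ) :
    mP q s t (N+1) = qM q s t N * factorMinus q s t 1 := by
  rw [mP, qM, List.range_succ_eq_map, List.map_cons, List.reverse_cons, List.prod_append,
    List.map_map]
  have hcomp : ((fun i => factorMinus q s t (i+1)) ∘ Nat.succ) = fun i => factorMinus q s t (i+2) := by
    funext i; rfl
  rw [hcomp, List.prod_singleton]

lemma conj_qQ (hq : q ≠ 0) (N : ℕ) :
    GamPS q s t * qQ q s t N = pP q s t N * GamPS q s t := by
  induction N with
  | zero =>
      rw [pP, qQ]
      simp
  | succ N ih =>
      rw [qQ_succ, pP_succ, ← mul_assoc, ih, mul_assoc, conjP q s t hq, ← mul_assoc]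

lemma conj_qM (hq : q ≠ 0) (N : ℕ) :
    GamMS q s t * qM q s t N = mP q s t N * GamMS q s t := by
  induction N with
  | zero =>
      rw [mP, qM]
      simp
  | succ N ih =>
      rw [qM_succ, mP_succ, ← mul_assoc, conjM q s t hq (by omega), mul_assoc, ih, ← mul_assoc]

lemma coeff_zero_factorPlus {n : ℕ} (hn : 0 < n) :
    PowerSeries.coeff 0 (factorPlus q s t n) = 1 := by
  rw [factorPlus, if_neg (by omega), PowerSeries.coeff_mk, if_pos (dvd_zero n)]
  simp [pfact]

lemma coeff_zero_factorMinus (n : ℕ) :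
    PowerSeries.coeff 0 (factorMinus q s t n) = 1 := by
  rw [factorMinus, PowerSeries.coeff_mk, if_pos (dvd_zero n)]
  simp [pfact]

lemma coeff_small_factorPlus {n e : ℕ} (h0 : 0 < e) (he : e < n) :
    PowerSeries.coeff e (factorPlus q s t n) = 0 := by
  rw [factorPlus, if_neg (by omega), PowerSeries.coeff_mk, if_neg]
  intro hdvd
  have := Nat.le_of_dvd h0 hdvd
  omega

lemma coeff_small_factorMinus {n e : ℕ} (h0 : 0 < e) (he : e < n) :
    PowerSeries.coeff e (factorMinus q s t n) = 0 := by
  rw [factorMinus, PowerSeries.coeff_mk, if_neg]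
  intro hdvd
  have := Nat.le_of_dvd h0 hdvd
  omega

lemma coeff_mul_right_one (A f : PowerSeries (Module.End ℂ TensorSpace)) (D : ℕ)
    (hf0 : PowerSeries.coeff 0 f = 1)
    (hf : ∀ e, 0 < e → e ≤ D → PowerSeries.coeff e f = 0) :
    PowerSeries.coeff D (A * f) = PowerSeries.coeff D A := by
  rw [PowerSeries.coeff_mul, Finset.Nat.sum_antidiagonal_eq_sum_range_succ_mk]
  rw [Finset.sum_eq_single_of_mem D (Finset.mem_range.2 (by omega))]
  · rw [Nat.sub_self, hf0, mul_one]
  · intro e he hne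
    have := Finset.mem_range.1 he
    rw [hf (D-e) (by omega) (by omega), mul_zero]

lemma coeff_mul_left_one (f A : PowerSeries (Module.End ℂ TensorSpace)) (D : ℕ)
    (hf0 : PowerSeries.coeff 0 f = 1)
    (hf : ∀ e, 0 < e → e ≤ D → PowerSeries.coeff e f = 0) :
    PowerSeries.coeff D (f * A) = PowerSeries.coeff D A := by
  rw [PowerSeries.coeff_mul, Finset.Nat.sum_antidiagonal_eq_sum_range_succ_mk]
  rw [Finset.sum_eq_single_of_mem 0 (Finset.mem_range.2 (by omega))]
  · rw [Nat.sub_zero, hf0, one_mul]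
  · intro e he hne
    have := Finset.mem_range.1 he
    rw [hf e (by omega) (by omega), zero_mul]

lemma stabP {D N : ℕ} (h : D ≤ N) :
    PowerSeries.coeff D (pP q s t (N+1)) = PowerSeries.coeff D (pP q s t (D+1)) := by
  induction N with
  | zero =>
      have : D = 0 := by omega
      subst this; rfl
  | succ N ih =>
      rcases Nat.lt_or_ge D (N+1) with h' | h'
      · rw [pP_succ]
        rw [coeff_mul_right_one _ _ _ (coeff_zero_factorPlus q s t (by omega))
          (fun e he hle => coeff_small_factorPlus q s t he (by omega))]
        exact ih (by omega)
      · have : D = N+1 := by omega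
        subst this; rfl

lemma stabM {D N : ℕ} (h : D ≤ N) :
    PowerSeries.coeff D (mP q s t (N+1)) = PowerSeries.coeff D (mP q s t (D+1)) := by
  induction N with
  | zero =>
      have : D = 0 := by omega
      subst this; rfl
  | succ N ih =>
      rcases Nat.lt_or_ge D (N+1) with h' | h'
      · rw [mP_succ]
        rw [coeff_mul_left_one _ _ _ (coeff_zero_factorMinus q s t (N+2))
          (fun e he hle => coeff_small_factorMinus q s t he (by omega))]
        exact ih (by omega)
      · have : D = N+1 := by omega
        subst this; rfl

lemma goodP_pP (N : ℕ) : GoodP (pP q s t N) := by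
  refine goodP_list_prod _ ?_
  intro X hX
  obtain ⟨n, _, rfl⟩ := List.mem_map.1 hX
  exact goodP_factorPlus q s t n

lemma goodP_qQ (N : ℕ) : GoodP (qQ q s t N) := by
  refine goodP_list_prod _ ?_
  intro X hX
  obtain ⟨n, _, rfl⟩ := List.mem_map.1 hX
  exact goodP_factorPlus q s t (n+1)

lemma goodM_mP (N : ℕ) : GoodM (mP q s t N) := by
  refine goodM_list_prod _ ?_
  intro X hX
  rw [List.mem_reverse] at hX
  obtain ⟨n, _, rfl⟩ := List.mem_map.1 hX
  exact goodM_factorMinus q s t (n+1) (by omega)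

lemma goodM_qM (N : ℕ) : GoodM (qM q s t N) := by
  refine goodM_list_prod _ ?_
  intro X hX
  rw [List.mem_reverse] at hX
  obtain ⟨n, _, rfl⟩ := List.mem_map.1 hX
  exact goodM_factorMinus q s t (n+2) (by omega)

lemma rPlus_coeff (D : ℕ) :
    PowerSeries.coeff D (rPlus q s t) = PowerSeries.coeff D (pP q s t (D+1)) := by
  rw [rPlus, PowerSeries.coeff_mk, pP]

lemma rMinus_coeff (D : ℕ) :
    PowerSeries.coeff D (rMinus q s t) = PowerSeries.coeff D (mP q s t (D+1)) := by
  rw [rMinus, PowerSeries.coeff_mk, mP]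

end GaussR
namespace GaussR

lemma ratl_zero : IsRationalPS 0 := ⟨0, 1, by simp, by simp⟩

lemma ratl_one : IsRationalPS 1 := ⟨1, 1, by simp, by simp⟩

lemma ratl_C_mul {S : PowerSeries ℂ} (κ : ℂ) (hS : IsRationalPS S) :
    IsRationalPS (PowerSeries.C κ * S) := by
  obtain ⟨f, g, hg, h⟩ := hS
  refine ⟨Polynomial.C κ * f, g, hg, ?_⟩
  rw [Polynomial.coe_mul, Polynomial.coe_C]
  linear_combination (PowerSeries.C κ) * h

lemma ratl_X_pow_mul {S : PowerSeries ℂ} (k : ℕ) (hS : IsRationalPS S) :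
    IsRationalPS (PowerSeries.X ^ k * S) := by
  obtain ⟨f, g, hg, h⟩ := hS
  refine ⟨Polynomial.X ^ k * f, g, hg, ?_⟩
  rw [Polynomial.coe_mul, Polynomial.coe_pow, Polynomial.coe_X]
  linear_combination (PowerSeries.X ^ k : PowerSeries ℂ) * h

lemma ratl_add {S T : PowerSeries ℂ} (hS : IsRationalPS S) (hT : IsRationalPS T) :
    IsRationalPS (S + T) := by
  obtain ⟨f1, g1, hg1, h1⟩ := hS
  obtain ⟨f2, g2, hg2, h2⟩ := hT
  refine ⟨f1 * g2 + f2 * g1, g1 * g2, ?_, ?_⟩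
  · rw [Polynomial.mul_coeff_zero]
    exact mul_ne_zero hg1 hg2
  · rw [Polynomial.coe_add, Polynomial.coe_mul, Polynomial.coe_mul, Polynomial.coe_mul]
    linear_combination (g2 : PowerSeries ℂ) * h1 + (g1 : PowerSeries ℂ) * h2

lemma ratl_sum {ι : Type*} (u : Finset ι) (F : ι → PowerSeries ℂ)
    (h : ∀ i ∈ u, IsRationalPS (F i)) : IsRationalPS (∑ i ∈ u, F i) := by
  classical
  induction u using Finset.induction_on with
  | empty => simpa using ratl_zero
  | insert _ _ hni ih =>
      rw [Finset.sum_insert hni]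
      exact ratl_add (h _ (by simp)) (ih fun i hi => h i (by simp [hi]))

lemma ratl_of_poly_mul {S T : PowerSeries ℂ} (P : Polynomial ℂ) (hP : P.coeff 0 ≠ 0)
    (h : (P : PowerSeries ℂ) * S = T) (hT : IsRationalPS T) : IsRationalPS S := by
  obtain ⟨f, g, hg, hgt⟩ := hT
  refine ⟨f, P * g, ?_, ?_⟩
  · rw [Polynomial.mul_coeff_zero]
    exact mul_ne_zero hP hg
  · rw [Polynomial.coe_mul]
    linear_combination (g : PowerSeries ℂ) * h + hgt

lemma coeff_X_pow_mul_ite (S : PowerSeries ℂ) (k D : ℕ) :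
    PowerSeries.coeff D (PowerSeries.X ^ k * S)
      = if k ≤ D then PowerSeries.coeff (D - k) S else 0 := by
  rcases le_or_gt k D with h | h
  · rw [if_pos h, show D = (D - k) + k by omega, PowerSeries.coeff_X_pow_mul,
      Nat.add_sub_cancel]
  · rw [if_neg (by omega), PowerSeries.coeff_mul, Finset.Nat.sum_antidiagonal_eq_sum_range_succ_mk]
    refine Finset.sum_eq_zero fun e he => ?_
    have := Finset.mem_range.1 he
    rw [PowerSeries.coeff_X_pow, if_neg (by omega), zero_mul]

end GaussR
namespace GaussR

variable (q s t : ℂ)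

lemma eval_rep_hit {c d : ℕ} {v : TensorSpace} {f : ℕ → ℂ}
    (hrep : v = ∑ k ∈ range (c+1), f k • Finsupp.single (c-k, d+k) 1)
    {k₀ : ℕ} (hk : k₀ ≤ c) : v (c-k₀, d+k₀) = f k₀ := by
  rw [hrep]
  exact eval_path_hit f (fun k => (c-k, d+k))
    (fun k k' h => by
      have := congrArg Prod.snd h
      simp only at this
      omega) (by omega)

lemma eval_rep_hitM {v : TensorSpace} {f : ℕ → ℂ} {i j : ℕ}
    (hrep : v = ∑ k ∈ range (j+1), f k • Finsupp.single (i+k, j-k) 1)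
    {k₀ : ℕ} (hk : k₀ ≤ j) : v (i+k₀, j-k₀) = f k₀ := by
  rw [hrep]
  exact eval_path_hit f (fun k => (i+k, j-k))
    (fun k k' h => by
      have := congrArg Prod.fst h
      simp only at this
      omega) (by omega)

lemma eval_rep_missM {v : TensorSpace} {f : ℕ → ℂ} {i j : ℕ} (y : ℕ × ℕ)
    (hrep : v = ∑ k ∈ range (j+1), f k • Finsupp.single (i+k, j-k) 1)
    (hy : ∀ k, k ≤ j → (i+k, j-k) ≠ y) : v y = 0 := by
  rw [hrep]
  exact eval_path_miss f _ y (fun k hk => hy k (by omega))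

lemma eval_rep_gOpP {c d : ℕ} {v : TensorSpace} {f : ℕ → ℂ}
    (hrep : v = ∑ k ∈ range (c+1), f k • Finsupp.single (c-k, d+k) 1)
    (e : ℕ) {k₀ : ℕ} (hk : k₀ ≤ c) :
    (gOpP q s t e v) (c-k₀, d+k₀)
      = if c-k₀ = e then gamP q s t (c-k₀) (d+k₀) * f k₀ else 0 := by
  rw [hrep, map_sum, Finset.sum_apply']
  have hterm : ∀ k ∈ range (c+1),
      (gOpP q s t e (f k • Finsupp.single (c-k, d+k) 1)) (c-k₀, d+k₀)
        = if (c-k = e ∧ k = k₀) then gamP q s t (c-k) (d+k) * f k else 0 := by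
    intro k hk'
    rw [map_smul, gOpP_single]
    by_cases h1 : c-k = e
    · rw [if_pos h1]
      by_cases h2 : k = k₀
      · subst h2
        rw [if_pos ⟨h1, rfl⟩, Finsupp.smul_apply, Finsupp.smul_apply, Finsupp.single_apply,
          if_pos rfl, smul_eq_mul, smul_eq_mul, mul_one, mul_comm]
      · rw [if_neg (by tauto), Finsupp.smul_apply, Finsupp.smul_apply, Finsupp.single_apply,
          if_neg (by
            intro h
            have := congrArg Prod.snd h
            simp only at this
            omega), smul_zero, smul_zero]
    · rw [if_neg h1, if_neg (by tauto), smul_zero]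
      simp
  rw [Finset.sum_congr rfl hterm]
  by_cases he : c-k₀ = e
  · rw [if_pos he, Finset.sum_eq_single_of_mem k₀ (Finset.mem_range.2 (by omega))]
    · rw [if_pos ⟨he, rfl⟩]
    · intro k _ hne
      rw [if_neg (by tauto)]
  · rw [if_neg he]
    exact Finset.sum_eq_zero fun k _ => by
      rw [if_neg]
      rintro ⟨h1, rfl⟩
      exact he h1

lemma eval_rep_gOpM {i j : ℕ} {v : TensorSpace} {f : ℕ → ℂ}
    (hrep : v = ∑ k ∈ range (j+1), f k • Finsupp.single (i+k, j-k) 1)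
    (e : ℕ) {k₀ : ℕ} (hk : k₀ ≤ j) :
    (gOpM q s t e v) (i+k₀, j-k₀)
      = if j-k₀ = e then gamM q s t (i+k₀) (j-k₀) * f k₀ else 0 := by
  rw [hrep, map_sum, Finset.sum_apply']
  have hterm : ∀ k ∈ range (j+1),
      (gOpM q s t e (f k • Finsupp.single (i+k, j-k) 1)) (i+k₀, j-k₀)
        = if (j-k = e ∧ k = k₀) then gamM q s t (i+k) (j-k) * f k else 0 := by
    intro k hk'
    rw [map_smul, gOpM_single]
    by_cases h1 : j-k = e
    · rw [if_pos h1]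
      by_cases h2 : k = k₀
      · subst h2
        rw [if_pos ⟨h1, rfl⟩, Finsupp.smul_apply, Finsupp.smul_apply, Finsupp.single_apply,
          if_pos rfl, smul_eq_mul, smul_eq_mul, mul_one, mul_comm]
      · rw [if_neg (by tauto), Finsupp.smul_apply, Finsupp.smul_apply, Finsupp.single_apply,
          if_neg (by
            intro h
            have := congrArg Prod.fst h
            simp only at this
            omega), smul_zero, smul_zero]
    · rw [if_neg h1, if_neg (by tauto), smul_zero]
      simp
  rw [Finset.sum_congr rfl hterm]
  by_cases he : j-k₀ = e
  · rw [if_pos he, Finset.sum_eq_single_of_mem k₀ (Finset.mem_range.2 (by omega))]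
    · rw [if_pos ⟨he, rfl⟩]
    · intro k _ hne
      rw [if_neg (by tauto)]
  · rw [if_neg he]
    exact Finset.sum_eq_zero fun k _ => by
      rw [if_neg]
      rintro ⟨h1, rfl⟩
      exact he h1

/-- the Γ⁺-intertwining at the level of matrix entries. -/
lemma S1 (hq : q ≠ 0) (c d N D k : ℕ) (hk : k ≤ c) :
    gamP q s t (c-k) (d+k)
        * ((PowerSeries.coeff D (qQ q s t N)) (Finsupp.single (c,d) 1)) (c-k, d+k)
      = if k ≤ D then gamP q s t c d
          * ((PowerSeries.coeff (D-k) (pP q s t N)) (Finsupp.single (c,d) 1)) (c-k, d+k)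
        else 0 := by
  choose F hF0 hF using goodP_qQ q s t N
  have hconj := congrArg
    (fun Z => ((PowerSeries.coeff (D + (c-k)) Z) (Finsupp.single ((c : ℕ),(d : ℕ)) 1)) (c-k, d+k))
    (conj_qQ q s t hq N)
  rw [coeff_mul_apply, coeff_mul_apply, Finset.sum_apply', Finset.sum_apply'] at hconj
  have hL : ∀ e ∈ range (D + (c-k) + 1),
      ((PowerSeries.coeff e (GamPS q s t))
          ((PowerSeries.coeff (D + (c-k) - e) (qQ q s t N)) (Finsupp.single (c,d) 1))) (c-k, d+k)
        = if c-k = e then gamP q s t (c-k) (d+k) * F (D + (c-k) - e) c d k else 0 := by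
    intro e _
    rw [GamPS, PowerSeries.coeff_mk]
    exact eval_rep_gOpP q s t (hF (D + (c-k) - e) c d) e hk
  rw [Finset.sum_congr rfl hL] at hconj
  rw [Finset.sum_eq_single_of_mem (c-k) (Finset.mem_range.2 (by omega)) (fun e _ hne => by
    rw [if_neg (fun h => hne h.symm)])] at hconj
  rw [if_pos rfl, show D + (c-k) - (c-k) = D by omega] at hconj
  have hRside : ∀ e ∈ range (D + (c-k) + 1),
      ((PowerSeries.coeff e (pP q s t N))
          ((PowerSeries.coeff (D + (c-k) - e) (GamPS q s t)) (Finsupp.single (c,d) 1))) (c-k, d+k)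
        = if c = D + (c-k) - e then
            gamP q s t c d * ((PowerSeries.coeff e (pP q s t N)) (Finsupp.single (c,d) 1)) (c-k, d+k)
          else 0 := by
    intro e _
    rw [GamPS, PowerSeries.coeff_mk, gOpP_single]
    by_cases h2 : c = D + (c-k) - e
    · rw [if_pos h2, map_smul, Finsupp.smul_apply, smul_eq_mul, if_pos h2]
    · rw [if_neg h2, map_zero, if_neg h2]
      simp
  rw [Finset.sum_congr rfl hRside] at hconj
  by_cases hkD : k ≤ D
  · rw [Finset.sum_eq_single_of_mem (D-k) (Finset.mem_range.2 (by omega)) (fun e he hne => by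
      have := Finset.mem_range.1 he
      rw [if_neg (by omega)])] at hconj
    rw [if_pos (by omega)] at hconj
    rw [if_pos hkD, eval_rep_hit (hF D c d) hk]
    exact hconj
  · rw [Finset.sum_eq_zero (fun e he => by
      have := Finset.mem_range.1 he
      rw [if_neg (by omega)])] at hconj
    rw [if_neg hkD, eval_rep_hit (hF D c d) hk]
    exact hconj

/-- assembling `pP (N+1) = C E₀ * qQ N` at the level of matrix entries. -/
lemma S2 (c d N D m : ℕ) (hm : m ≤ c) :
    ((PowerSeries.coeff D (pP q s t (N+1))) (Finsupp.single (c,d) 1)) (c-m, d+m)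
      = ∑ k ∈ range (m+1),
          ((PowerSeries.coeff D (qQ q s t N)) (Finsupp.single (c,d) 1)) (c-k, d+k)
            * bP q s t 0 (m-k) (c-k) (d+k) := by
  choose F hF0 hF using goodP_qQ q s t N
  rw [pP_decomp, PowerSeries.coeff_C_mul, Module.End.mul_apply]
  rw [hF D c d, map_sum]
  rw [Finset.sum_apply']
  have hterm : ∀ k ∈ range (c+1),
      (expFactorZero q s t (F D c d k • Finsupp.single (c-k, d+k) 1)) (c-m, d+m)
        = if k ≤ m then F D c d k * bP q s t 0 (m-k) (c-k) (d+k) else 0 := by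
    intro k hk
    have hkc := Finset.mem_range.1 hk
    rw [map_smul, expFactorZero_single, Finsupp.smul_apply]
    by_cases hkm : k ≤ m
    · rw [if_pos hkm]
      have : (∑ E ∈ range (c-k+1), bP q s t 0 E (c-k) (d+k)
            • Finsupp.single (c-k-E, d+k+E) (1:ℂ)) (c-m, d+m)
          = bP q s t 0 (m-k) (c-k) (d+k) := by
        have := eval_path_hit (fun E => bP q s t 0 E (c-k) (d+k))
          (fun E => (c-k-E, d+k+E))
          (fun E E' h => by
            have := congrArg Prod.snd h
            simp only at this
            omega) (show m-k < c-k+1 by omega)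
        rw [show c-k-(m-k) = c-m by omega, show d+k+(m-k) = d+m by omega] at this
        exact this
      rw [this, smul_eq_mul]
    · rw [if_neg hkm]
      have : (∑ E ∈ range (c-k+1), bP q s t 0 E (c-k) (d+k)
            • Finsupp.single (c-k-E, d+k+E) (1:ℂ)) (c-m, d+m) = 0 := by
        refine eval_path_miss _ (fun E => (c-k-E, d+k+E)) _ (fun E hE => ?_)
        intro h
        have := congrArg Prod.snd h
        simp only at this
        omega
      rw [this, smul_zero]
  rw [Finset.sum_congr rfl hterm]
  rw [← Finset.sum_subset (Finset.range_subset_range.2 (show m+1 ≤ c+1 by omega))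
    (fun k hk hnk => by
      have h1 := Finset.mem_range.1 hk
      have h2 : ¬ k ≤ m := fun h => hnk (Finset.mem_range.2 (by omega))
      rw [if_neg h2])]
  refine Finset.sum_congr rfl fun k hk => ?_
  have hkm := Finset.mem_range.1 hk
  rw [if_pos (by omega),
    show (∑ k' ∈ range (c+1), F D c d k' • Finsupp.single (c-k', d+k') (1:ℂ)) (c-k, d+k)
        = F D c d k from eval_path_hit (F D c d) (fun k => (c-k, d+k))
      (fun k k' h => by
        have := congrArg Prod.snd h
        simp only at this
        omega) (by omega)]

end GaussR
namespace GaussR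

variable (q s t : ℂ)

def SPser (q s t : ℂ) (c d : ℕ) (x : ℕ × ℕ) : PowerSeries ℂ :=
  PowerSeries.mk fun D => ((PowerSeries.coeff D (pP q s t (D+1))) (Finsupp.single (c,d) 1)) x

lemma SPser_diag (c d : ℕ) : SPser q s t c d (c, d) = 1 := by
  refine PowerSeries.ext fun D => ?_
  rw [SPser, PowerSeries.coeff_mk, PowerSeries.coeff_one]
  obtain ⟨f, hf0, hf⟩ := goodP_pP q s t (D+1) D c d
  rw [hf]
  have := eval_path_hit f (fun k => (c-k, d+k))
    (fun k k' h => by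
      have := congrArg Prod.snd h
      simp only at this
      omega) (show 0 < c+1 by omega)
  simp only [Nat.sub_zero, Nat.add_zero] at this
  rw [this, hf0]

lemma S3 (hq : q ≠ 0) (hs : s ≠ 0) (ht : t ≠ 0) (c d m : ℕ) (hm : m ≤ c) :
    SPser q s t c d (c-m, d+m)
      = ∑ k ∈ range (m+1),
          PowerSeries.C ((gamP q s t (c-k) (d+k))⁻¹ * gamP q s t c d
              * bP q s t 0 (m-k) (c-k) (d+k))
            * (PowerSeries.X ^ k * SPser q s t c d (c-k, d+k)) := by
  refine PowerSeries.ext fun D => ?_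
  rw [SPser, PowerSeries.coeff_mk, map_sum]
  rw [← stabP q s t (show D ≤ D+1 by omega)]
  rw [S2 q s t c d (D+1) D m hm]
  refine Finset.sum_congr rfl fun k hk => ?_
  have hk' := Finset.mem_range.1 hk
  have hne := gamP_ne_zero q s t hq hs ht (c-k) (d+k)
  have hv : ((PowerSeries.coeff D (qQ q s t (D+1))) (Finsupp.single (c,d) 1)) (c-k, d+k)
      = (gamP q s t (c-k) (d+k))⁻¹ * (gamP q s t (c-k) (d+k)
          * ((PowerSeries.coeff D (qQ q s t (D+1))) (Finsupp.single (c,d) 1)) (c-k, d+k)) :=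
    (inv_mul_cancel_left₀ hne _).symm
  rw [hv, S1 q s t hq c d (D+1) D k (by omega)]
  rw [stabP q s t (show D-k ≤ D by omega)]
  rw [PowerSeries.coeff_C_mul, coeff_X_pow_mul_ite, SPser, PowerSeries.coeff_mk]
  by_cases hkD : k ≤ D
  · rw [if_pos hkD, if_pos hkD]
    ring
  · rw [if_neg hkD, if_neg hkD]
    ring

lemma ratl_SP (hq : q ≠ 0) (hs : s ≠ 0) (ht : t ≠ 0) :
    ∀ m c d : ℕ, m ≤ c → IsRationalPS (SPser q s t c d (c-m, d+m)) := by
  intro m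
  induction m using Nat.strong_induction_on with
  | _ m ih =>
    intro c d hm
    rcases Nat.eq_zero_or_pos m with rfl | hm0
    · have h1 : SPser q s t c d (c-0, d+0) = 1 := by
        rw [Nat.sub_zero, Nat.add_zero]
        exact SPser_diag q s t c d
      rw [h1]
      exact ratl_one
    · have hS3 := S3 q s t hq hs ht c d m hm
      rw [Finset.sum_range_succ] at hS3
      set κ := (gamP q s t (c-m) (d+m))⁻¹ * gamP q s t c d * bP q s t 0 (m-m) (c-m) (d+m) with hκ
      have hP : ((1 - Polynomial.C κ * Polynomial.X^m : Polynomial ℂ) : PowerSeries ℂ)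
          * SPser q s t c d (c-m, d+m)
          = ∑ k ∈ range m,
              PowerSeries.C ((gamP q s t (c-k) (d+k))⁻¹ * gamP q s t c d
                  * bP q s t 0 (m-k) (c-k) (d+k))
                * (PowerSeries.X ^ k * SPser q s t c d (c-k, d+k)) := by
        rw [Polynomial.coe_sub, Polynomial.coe_one, Polynomial.coe_mul, Polynomial.coe_C,
          Polynomial.coe_pow, Polynomial.coe_X]
        rw [sub_mul, one_mul]
        linear_combination hS3
      refine ratl_of_poly_mul _ ?_ hP (ratl_sum _ _ ?_)
      · have hme : ¬ ((0:ℕ) = m) := by omega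
        simp [Polynomial.coeff_X_pow, hme]
      · intro k hk
        have hk' := Finset.mem_range.1 hk
        exact ratl_C_mul _ (ratl_X_pow_mul _ (ih k hk' c d (by omega)))

lemma plus_half (hq : q ≠ 0) (hs : s ≠ 0) (ht : t ≠ 0) (a b c d : ℕ) :
    IsRationalPS (PowerSeries.mk fun m =>
      ((PowerSeries.coeff m (rPlus q s t))
        (Finsupp.single (c, d) 1)) (a, b)) := by
  have hser : (PowerSeries.mk fun m =>
      ((PowerSeries.coeff m (rPlus q s t))
        (Finsupp.single (c, d) 1)) (a, b)) = SPser q s t c d (a, b) :=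
    PowerSeries.ext fun D => by
      rw [PowerSeries.coeff_mk, SPser, PowerSeries.coeff_mk, rPlus_coeff]
  rw [hser]
  by_cases h : ∃ k, k ≤ c ∧ ((c-k : ℕ), (d+k : ℕ)) = (a, b)
  · obtain ⟨k, hk, hx⟩ := h
    rw [← hx]
    exact ratl_SP q s t hq hs ht k c d hk
  · have h0 : SPser q s t c d (a, b) = 0 := by
      refine PowerSeries.ext fun D => ?_
      rw [SPser, PowerSeries.coeff_mk, map_zero]
      obtain ⟨f, hf0, hf⟩ := goodP_pP q s t (D+1) D c d
      rw [hf]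
      exact eval_path_miss f _ (a, b) fun k hk he => h ⟨k, by omega, he⟩
    rw [h0]
    exact ratl_zero

end GaussR
namespace GaussR

variable (q s t : ℂ)

lemma coeff_fm1 (D' i j : ℕ) :
    (PowerSeries.coeff D' (factorMinus q s t 1)) (Finsupp.single (i,j) 1)
      = bM q s t 1 D' i j • Finsupp.single (i+D', j-D') 1 := by
  rw [factorMinus, PowerSeries.coeff_mk, if_pos (one_dvd _), Nat.div_one,
    LinearMap.smul_apply, phiMinus_pow_single, smul_smul, bM]

/-- the Γ⁻-intertwining at the level of matrix entries. -/
lemma S1m (hq : q ≠ 0) (i j N D r : ℕ) (hr : r ≤ j) :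
    gamM q s t (i+r) (j-r)
        * ((PowerSeries.coeff D (qM q s t N)) (Finsupp.single (i,j) 1)) (i+r, j-r)
      = if r ≤ D then gamM q s t i j
          * ((PowerSeries.coeff (D-r) (mP q s t N)) (Finsupp.single (i,j) 1)) (i+r, j-r)
        else 0 := by
  choose F hF0 hF using goodM_qM q s t N
  have hconj := congrArg
    (fun Z => ((PowerSeries.coeff (D + (j-r)) Z) (Finsupp.single ((i : ℕ),(j : ℕ)) 1)) (i+r, j-r))
    (conj_qM q s t hq N)
  rw [coeff_mul_apply, coeff_mul_apply, Finset.sum_apply', Finset.sum_apply'] at hconj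
  have hL : ∀ e ∈ range (D + (j-r) + 1),
      ((PowerSeries.coeff e (GamMS q s t))
          ((PowerSeries.coeff (D + (j-r) - e) (qM q s t N)) (Finsupp.single (i,j) 1))) (i+r, j-r)
        = if j-r = e then gamM q s t (i+r) (j-r) * F (D + (j-r) - e) i j r else 0 := by
    intro e _
    rw [GamMS, PowerSeries.coeff_mk]
    exact eval_rep_gOpM q s t (hF (D + (j-r) - e) i j) e hr
  rw [Finset.sum_congr rfl hL] at hconj
  rw [Finset.sum_eq_single_of_mem (j-r) (Finset.mem_range.2 (by omega)) (fun e _ hne => by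
    rw [if_neg (fun h => hne h.symm)])] at hconj
  rw [if_pos rfl, show D + (j-r) - (j-r) = D by omega] at hconj
  have hRside : ∀ e ∈ range (D + (j-r) + 1),
      ((PowerSeries.coeff e (mP q s t N))
          ((PowerSeries.coeff (D + (j-r) - e) (GamMS q s t)) (Finsupp.single (i,j) 1))) (i+r, j-r)
        = if j = D + (j-r) - e then
            gamM q s t i j * ((PowerSeries.coeff e (mP q s t N)) (Finsupp.single (i,j) 1)) (i+r, j-r)
          else 0 := by
    intro e _
    rw [GamMS, PowerSeries.coeff_mk, gOpM_single]
    by_cases h2 : j = D + (j-r) - e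
    · rw [if_pos h2, map_smul, Finsupp.smul_apply, smul_eq_mul, if_pos h2]
    · rw [if_neg h2, map_zero, if_neg h2]
      simp
  rw [Finset.sum_congr rfl hRside] at hconj
  by_cases hrD : r ≤ D
  · rw [Finset.sum_eq_single_of_mem (D-r) (Finset.mem_range.2 (by omega)) (fun e he hne => by
      have := Finset.mem_range.1 he
      rw [if_neg (by omega)])] at hconj
    rw [if_pos (by omega)] at hconj
    rw [if_pos hrD, eval_rep_hitM (hF D i j) hr]
    exact hconj
  · rw [Finset.sum_eq_zero (fun e he => by
      have := Finset.mem_range.1 he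
      rw [if_neg (by omega)])] at hconj
    rw [if_neg hrD, eval_rep_hitM (hF D i j) hr]
    exact hconj

lemma S2m (i j N D : ℕ) (x : ℕ × ℕ) :
    ((PowerSeries.coeff D (mP q s t (N+1))) (Finsupp.single (i,j) 1)) x
      = ∑ e ∈ range (D+1), bM q s t 1 (D-e) i j
          * ((PowerSeries.coeff e (qM q s t N)) (Finsupp.single (i+(D-e), j-(D-e)) 1)) x := by
  rw [mP_decomp, coeff_mul_apply, Finset.sum_apply']
  refine Finset.sum_congr rfl fun e _ => ?_
  rw [coeff_fm1, map_smul, Finsupp.smul_apply, smul_eq_mul]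

def SMser (q s t : ℂ) (a b : ℕ) (y : ℕ × ℕ) : PowerSeries ℂ :=
  PowerSeries.mk fun D => ((PowerSeries.coeff D (mP q s t (D+1))) (Finsupp.single y 1)) (a, b)

lemma SMser_diag (a b : ℕ) : SMser q s t a b (a, b) = 1 := by
  refine PowerSeries.ext fun D => ?_
  rw [SMser, PowerSeries.coeff_mk, PowerSeries.coeff_one]
  obtain ⟨f, hf0, hf⟩ := goodM_mP q s t (D+1) D a b
  rw [hf]
  have := eval_path_hit f (fun k => (a+k, b-k))
    (fun k k' h => by
      have := congrArg Prod.fst h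
      simp only at this
      omega) (show 0 < b+1 by omega)
  simp only [Nat.add_zero, Nat.sub_zero] at this
  rw [this, hf0]

lemma S3m (hq : q ≠ 0) (hs : s ≠ 0) (ht : t ≠ 0) (m' i j : ℕ) (hm : m' ≤ j) :
    SMser q s t (i+m') (j-m') (i,j)
      = PowerSeries.X ^ m' * ∑ k ∈ range (m'+1),
          PowerSeries.C (bM q s t 1 k i j * (gamM q s t (i+m') (j-m'))⁻¹
              * gamM q s t (i+k) (j-k))
            * SMser q s t (i+m') (j-m') (i+k, j-k) := by
  refine PowerSeries.ext fun D => ?_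
  rw [SMser, PowerSeries.coeff_mk]
  rw [← stabM q s t (show D ≤ D+1 by omega)]
  rw [S2m q s t i j (D+1) D (i+m', j-m')]
  set G : ℕ → ℂ := fun w => if w ≤ m' then bM q s t 1 w i j * (gamM q s t (i+m') (j-m'))⁻¹
      * (if m' ≤ D then gamM q s t (i+w) (j-w)
          * PowerSeries.coeff (D-m') (SMser q s t (i+m') (j-m') (i+w, j-w)) else 0)
    else 0 with hG
  have hterm : ∀ e ∈ range (D+1),
      bM q s t 1 (D-e) i j
          * ((PowerSeries.coeff e (qM q s t (D+1))) (Finsupp.single (i+(D-e), j-(D-e)) 1)) (i+m', j-m')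
        = G (D-e) := by
    intro e he
    have heD := Finset.mem_range.1 he
    by_cases hw : D-e ≤ m'
    · rw [hG]
      simp only
      rw [if_pos hw]
      have hr : m' - (D-e) ≤ j - (D-e) := by omega
      have hS1 := S1m q s t hq (i+(D-e)) (j-(D-e)) (D+1) e (m'-(D-e)) hr
      rw [show i+(D-e)+(m'-(D-e)) = i+m' by omega,
        show j-(D-e)-(m'-(D-e)) = j-m' by omega] at hS1
      have hne := gamM_ne_zero q s t hq hs ht (i+m') (j-m')
      have hv : ((PowerSeries.coeff e (qM q s t (D+1))) (Finsupp.single (i+(D-e), j-(D-e)) 1)) (i+m', j-m')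
          = (gamM q s t (i+m') (j-m'))⁻¹ * (gamM q s t (i+m') (j-m')
              * ((PowerSeries.coeff e (qM q s t (D+1))) (Finsupp.single (i+(D-e), j-(D-e)) 1)) (i+m', j-m')) :=
        (inv_mul_cancel_left₀ hne _).symm
      rw [hv, hS1]
      by_cases hmD : m' ≤ D
      · rw [if_pos (by omega), if_pos hmD]
        rw [show e - (m'-(D-e)) = D - m' by omega]
        rw [stabM q s t (show D-m' ≤ D by omega)]
        rw [SMser, PowerSeries.coeff_mk]
        ring
      · rw [if_neg (by omega), if_neg hmD]
        ring
    · rw [hG]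
      simp only
      rw [if_neg hw]
      by_cases hwj : D-e ≤ j
      · have hzero : ((PowerSeries.coeff e (qM q s t (D+1)))
            (Finsupp.single (i+(D-e), j-(D-e)) 1)) (i+m', j-m') = 0 := by
          obtain ⟨f, hf0, hf⟩ := goodM_qM q s t (D+1) e (i+(D-e)) (j-(D-e))
          refine eval_rep_missM (i+m', j-m') hf (fun k' hk' heq => ?_)
          have := congrArg Prod.snd heq
          simp only at this
          omega
        rw [hzero, mul_zero]
      · rw [bM_big q s t (by omega), zero_mul]
  rw [Finset.sum_congr rfl hterm]
  have hrefl := Finset.sum_range_reflect G (D+1)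
  simp only [Nat.add_sub_cancel] at hrefl
  rw [hrefl]
  rw [coeff_X_pow_mul_ite, map_sum]
  by_cases hmD : m' ≤ D
  · rw [if_pos hmD]
    rw [← Finset.sum_subset (Finset.range_subset_range.2 (show m'+1 ≤ D+1 by omega))
      (fun w hw hnw => by
        have h1 := Finset.mem_range.1 hw
        have h2 : ¬ w ≤ m' := fun h => hnw (Finset.mem_range.2 (by omega))
        rw [hG]
        simp only
        rw [if_neg h2])]
    refine Finset.sum_congr rfl fun k hk => ?_
    have hk' := Finset.mem_range.1 hk
    rw [hG]
    simp only
    rw [if_pos (by omega), if_pos hmD, PowerSeries.coeff_C_mul]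
    ring
  · rw [if_neg hmD]
    refine Finset.sum_eq_zero fun w hw => ?_
    have hw' := Finset.mem_range.1 hw
    rw [hG]
    simp only
    by_cases h1 : w ≤ m'
    · rw [if_pos h1, if_neg hmD, mul_zero]
    · rw [if_neg h1]

lemma ratl_SM (hq : q ≠ 0) (hs : s ≠ 0) (ht : t ≠ 0) :
    ∀ m' i j : ℕ, m' ≤ j → IsRationalPS (SMser q s t (i+m') (j-m') (i, j)) := by
  intro m'
  induction m' using Nat.strong_induction_on with
  | _ m' ih =>
    intro i j hm
    rcases Nat.eq_zero_or_pos m' with rfl | hm0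
    · have h1 : SMser q s t (i+0) (j-0) (i, j) = 1 := by
        rw [Nat.add_zero, Nat.sub_zero]
        exact SMser_diag q s t i j
      rw [h1]
      exact ratl_one
    · have hS3 := S3m q s t hq hs ht m' i j hm
      rw [Finset.sum_range_succ'] at hS3
      simp only [Nat.add_zero, Nat.sub_zero] at hS3
      set κ := bM q s t 1 0 i j * (gamM q s t (i+m') (j-m'))⁻¹ * gamM q s t i j with hκ
      have hP : ((1 - Polynomial.C κ * Polynomial.X^m' : Polynomial ℂ) : PowerSeries ℂ)
          * SMser q s t (i+m') (j-m') (i, j)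
          = PowerSeries.X ^ m' * ∑ k ∈ range m',
              PowerSeries.C (bM q s t 1 (k+1) i j * (gamM q s t (i+m') (j-m'))⁻¹
                  * gamM q s t (i+(k+1)) (j-(k+1)))
                * SMser q s t (i+m') (j-m') (i+(k+1), j-(k+1)) := by
        rw [Polynomial.coe_sub, Polynomial.coe_one, Polynomial.coe_mul, Polynomial.coe_C,
          Polynomial.coe_pow, Polynomial.coe_X]
        rw [sub_mul, one_mul]
        rw [mul_add] at hS3
        linear_combination hS3
      refine ratl_of_poly_mul _ ?_ hP (ratl_X_pow_mul _ (ratl_sum _ _ ?_))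
      · have hme : ¬ ((0:ℕ) = m') := by omega
        simp [Polynomial.coeff_X_pow, hme]
      · intro k hk
        have hk' := Finset.mem_range.1 hk
        refine ratl_C_mul _ ?_
        have := ih (m'-(k+1)) (by omega) (i+(k+1)) (j-(k+1)) (by omega)
        rw [show i+(k+1)+(m'-(k+1)) = i+m' by omega,
          show j-(k+1)-(m'-(k+1)) = j-m' by omega] at this
        exact this

lemma minus_half (hq : q ≠ 0) (hs : s ≠ 0) (ht : t ≠ 0) (a b c d : ℕ) :
    IsRationalPS (PowerSeries.mk fun m =>
      ((PowerSeries.coeff m (rMinus q s t))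
        (Finsupp.single (c, d) 1)) (a, b)) := by
  have hser : (PowerSeries.mk fun m =>
      ((PowerSeries.coeff m (rMinus q s t))
        (Finsupp.single (c, d) 1)) (a, b)) = SMser q s t a b (c, d) :=
    PowerSeries.ext fun D => by
      rw [PowerSeries.coeff_mk, SMser, PowerSeries.coeff_mk, rMinus_coeff]
  rw [hser]
  by_cases h : ∃ k, k ≤ d ∧ ((c+k : ℕ), (d-k : ℕ)) = (a, b)
  · obtain ⟨k, hk, hx⟩ := h
    have := ratl_SM q s t hq hs ht k c d hk
    obtain ⟨h1, h2⟩ := Prod.mk.inj hx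
    rw [h1, h2] at this
    exact this
  · have h0 : SMser q s t a b (c, d) = 0 := by
      refine PowerSeries.ext fun D => ?_
      rw [SMser, PowerSeries.coeff_mk, map_zero]
      obtain ⟨f, hf0, hf⟩ := goodM_mP q s t (D+1) D c d
      exact eval_rep_missM (a, b) hf fun k hk he => h ⟨k, by omega, he⟩
    rw [h0]
    exact ratl_zero

end GaussR

/-- Every matrix coefficient of `R⁺_{s,t}(z)` and of `R⁻_{s,t}(z)` with respect to
the basis `(v_i ⊗ w_j)` of `M_s ⊗ M_t` — the coefficient of `v_a ⊗ w_b` in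
`R^±_{s,t}(z)(v_c ⊗ w_d)` — is the Taylor expansion at `z = 0` of a rational
function of `z`. -/
theorem gauss_factors_rational (q s t : ℂ) (hq : q ≠ 0)
    (hroot : ∀ n : ℕ, 0 < n → q ^ n ≠ 1) (hs : s ≠ 0) (ht : t ≠ 0)
    (a b c d : ℕ) :
    IsRationalPS (PowerSeries.mk fun m =>
      ((PowerSeries.coeff m (rPlus q s t))
        (Finsupp.single (c, d) 1)) (a, b)) ∧
    IsRationalPS (PowerSeries.mk fun m =>
      ((PowerSeries.coeff m (rMinus q s t))
        (Finsupp.single (c, d) 1)) (a, b)) :=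
  ⟨GaussR.plus_half q s t hq hs ht a b c d, GaussR.minus_half q s t hq hs ht a b c d⟩
end
end

section
/- The three Gauss factors of the trigonometric R-matrix on M_s ⊗ M_t have triangular shape with respect to the weight grading: (i) R⁺_{s,t}(z)(v_i ⊗ w_j) − v_i ⊗ w_j lies in Σ_{n=1}^{i} ℂ[[z]] · (v_{i−n} ⊗ w_{j+n}); (ii) R⁻_{s,t}(z)(v_i ⊗ w_j) − v_i ⊗ w_j lies in Σ_{n=1}^{j} z^n ℂ[[z]] · (v_{i+n} ⊗ w_{j−n}); in particular both are unipotent with all matrix coefficients analytic (formal power series) at z = 0, while D_{s,t}(z) is diagonal. (This is the Gauss decomposition of the trigonometric R-matrix, Theorem 1 and its Corollary, in the case of U_q(ŝl₂) acting on a tensor product of evaluation Verma modules, where all weight spaces are one-dimensional.) -/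
noncomputable section

/-- The formal exponential of a power series (intended for series with zero
constant term): `exp S = Σ_k S^k/k!`, whose `z^m`-coefficient only involves
`k ≤ m` when `S` has zero constant term. -/
def expPS (S : PowerSeries ℂ) : PowerSeries ℂ :=
  PowerSeries.mk fun m =>
    ∑ k ∈ Finset.range (m + 1), ((k.factorial : ℂ))⁻¹ * PowerSeries.coeff m (S ^ k)

/-- `A_n(s,i) = s^n + s^{−n} q^{−2n} − (1 + q^{−2n}) s^{−n} q^{2in}`. -/
def Acoef (q s : ℂ) (i n : ℕ) : ℂ :=
  s ^ (n : ℤ) + s ^ (-(n : ℤ)) * q ^ (-2 * (n : ℤ))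
    - (1 + q ^ (-2 * (n : ℤ))) * s ^ (-(n : ℤ)) * q ^ (2 * (i : ℤ) * (n : ℤ))

/-- `B_n(t,j) = −t^{−n} − t^n q^{2n} + (1 + q^{2n}) t^n q^{−2jn}`. -/
def Bcoef (q t : ℂ) (j n : ℕ) : ℂ :=
  -t ^ (-(n : ℤ)) - t ^ (n : ℤ) * q ^ (2 * (n : ℤ))
    + (1 + q ^ (2 * (n : ℤ))) * t ^ (n : ℤ) * q ^ (-2 * (j : ℤ) * (n : ℤ))

/-- The diagonal entry of `D_{s,t}(z)` on `v_i ⊗ w_j`: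
`q^{2ij} s^{−j} t^{−i} exp( Σ_{n≥1} (z^n/n) A_n(s,i) B_n(t,j)/(q^{2n} − q^{−2n}) )`. -/
def dEntry (q s t : ℂ) (i j : ℕ) : PowerSeries ℂ :=
  (q ^ (2 * i * j) * s ^ (-(j : ℤ)) * t ^ (-(i : ℤ))) •
    expPS (PowerSeries.mk fun n =>
      if n = 0 then 0 else
        Acoef q s i n * Bcoef q t j n /
          ((n : ℂ) * (q ^ (2 * (n : ℤ)) - q ^ (-2 * (n : ℤ)))))

/-- The diagonal Gauss factor `D_{s,t}(z)`, with
`D_{s,t}(z)(v_i ⊗ w_j) = dEntry q s t i j · v_i ⊗ w_j`. -/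
def dMat (q s t : ℂ) : PowerSeries (Module.End ℂ TensorSpace) :=
  PowerSeries.mk fun m =>
    Finsupp.lsum ℂ fun ij => LinearMap.toSpanSingleton ℂ TensorSpace
      ((PowerSeries.coeff m (dEntry q s t ij.1 ij.2)) • Finsupp.single ij 1)

/-- The trigonometric R-matrix `R_{s,t}(z) = R⁺_{s,t}(z) ∘ D_{s,t}(z) ∘ R⁻_{s,t}(z)`. -/
def rFull (q s t : ℂ) : PowerSeries (Module.End ℂ TensorSpace) :=
  rPlus q s t * dMat q s t * rMinus q s t
/-! ### Auxiliary lemmas for the Gauss decomposition triangularity -/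

section Aux

open Finsupp PowerSeries

lemma eig_pow {V : Type*} [AddCommGroup V] [Module ℂ V] (T : Module.End ℂ V) (c : ℂ) (x : V)
    (h : T x = c • x) : ∀ n : ℕ, (T ^ n) x = c ^ n • x := by
  intro n
  induction n with
  | zero => simp
  | succ n ih =>
    rw [pow_succ, Module.End.mul_apply, h, map_smul, ih, smul_smul, mul_comm, ← pow_succ]

lemma outer_single (i j : ℕ) (a b : ℂ) :
    outer (Finsupp.single i a) (Finsupp.single j b) = Finsupp.single (i, j) (a * b) := by
  unfold outer
  rw [Finsupp.sum_single_index, Finsupp.sum_single_index]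
  · simp
  · simp

lemma tensEnd_single (A B : Module.End ℂ VermaSpace) (i j : ℕ) :
    tensEnd A B (Finsupp.single (i, j) 1) =
      outer (A (Finsupp.single i 1)) (B (Finsupp.single j 1)) := by
  simp [tensEnd, Finsupp.lsum_single, LinearMap.toSpanSingleton_apply]

lemma vermaF_single (j : ℕ) : vermaF (Finsupp.single j 1) = Finsupp.single (j + 1) 1 := by
  simp [vermaF, Finsupp.lsum_single, LinearMap.toSpanSingleton_apply]

lemma vermaE_single (q s : ℂ) (k : ℕ) :
    vermaE q s (Finsupp.single k 1) =
      (qint q (k : ℤ) * ((s * q ^ (1 - (k : ℤ)) - s⁻¹ * q ^ ((k : ℤ) - 1)) / (q - q⁻¹))) •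
        Finsupp.single (k - 1) 1 := by
  simp [vermaE, Finsupp.lsum_single, LinearMap.toSpanSingleton_apply]

lemma vermaK_single (q s : ℂ) (k : ℕ) :
    vermaK q s (Finsupp.single k 1) = (s * q ^ (-2 * (k : ℤ))) • Finsupp.single k 1 := by
  simp [vermaK, Finsupp.lsum_single, LinearMap.toSpanSingleton_apply]

lemma vermaKinv_single (q s : ℂ) (k : ℕ) :
    vermaKinv q s (Finsupp.single k 1) = (s⁻¹ * q ^ (2 * (k : ℤ))) • Finsupp.single k 1 := by
  simp [vermaKinv, Finsupp.lsum_single, LinearMap.toSpanSingleton_apply]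

lemma qint_zero (q : ℂ) : qint q 0 = 0 := by simp [qint]

lemma phiPlus_single (q s t : ℂ) (n i j : ℕ) :
    ∃ a : ℂ, phiPlus q s t n (Finsupp.single (i, j) 1) = a • Finsupp.single (i - 1, j + 1) 1 ∧
      (i = 0 → a = 0) := by
  set cE : ℂ := qint q (i : ℤ) * ((s * q ^ (1 - (i : ℤ)) - s⁻¹ * q ^ ((i : ℤ) - 1)) / (q - q⁻¹))
    with hcE
  set cKi : ℂ := s⁻¹ * q ^ (2 * ((i - 1 : ℕ) : ℤ)) with hcKi
  set cKj : ℂ := t * q ^ (-2 * (j : ℤ)) with hcKj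
  refine ⟨cE * cKi ^ n * cKj ^ n, ?_, ?_⟩
  · rw [phiPlus, tensEnd_single]
    have h1 : ((vermaKinv q s) ^ n * vermaE q s) (Finsupp.single i 1)
        = (cE * cKi ^ n) • Finsupp.single (i - 1) 1 := by
      rw [Module.End.mul_apply, vermaE_single, map_smul,
        eig_pow (vermaKinv q s) cKi _ (vermaKinv_single q s (i - 1)), smul_smul]
    have h2 : (vermaF * (vermaK q t) ^ n) (Finsupp.single j 1)
        = cKj ^ n • Finsupp.single (j + 1) 1 := by
      rw [Module.End.mul_apply, eig_pow (vermaK q t) cKj _ (vermaK_single q t j), map_smul,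
        vermaF_single]
    rw [h1, h2, Finsupp.smul_single, Finsupp.smul_single, outer_single,
      Finsupp.smul_single, smul_eq_mul, smul_eq_mul, smul_eq_mul, mul_one]
    congr 1
    ring
  · intro hi
    have : cE = 0 := by
      subst hi
      simp [hcE, qint_zero]
    simp [this]

lemma phiMinus_single (q s t : ℂ) (n i j : ℕ) :
    ∃ a : ℂ, phiMinus q s t n (Finsupp.single (i, j) 1) = a • Finsupp.single (i + 1, j - 1) 1 ∧
      (j = 0 → a = 0) := by
  set cE : ℂ := qint q (j : ℤ) * ((t * q ^ (1 - (j : ℤ)) - t⁻¹ * q ^ ((j : ℤ) - 1)) / (q - q⁻¹))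
    with hcE
  set cKi : ℂ := s⁻¹ * q ^ (2 * (i : ℤ)) with hcKi
  set cKj : ℂ := t * q ^ (-2 * ((j - 1 : ℕ) : ℤ)) with hcKj
  refine ⟨cKi ^ n * (cE * cKj ^ n), ?_, ?_⟩
  · rw [phiMinus, tensEnd_single]
    have h1 : (vermaF * (vermaKinv q s) ^ n) (Finsupp.single i 1)
        = cKi ^ n • Finsupp.single (i + 1) 1 := by
      rw [Module.End.mul_apply, eig_pow (vermaKinv q s) cKi _ (vermaKinv_single q s i), map_smul,
        vermaF_single]
    have h2 : ((vermaK q t) ^ n * vermaE q t) (Finsupp.single j 1)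
        = (cE * cKj ^ n) • Finsupp.single (j - 1) 1 := by
      rw [Module.End.mul_apply, vermaE_single, map_smul,
        eig_pow (vermaK q t) cKj _ (vermaK_single q t (j - 1)), smul_smul]
    rw [h1, h2, Finsupp.smul_single, Finsupp.smul_single, outer_single,
      Finsupp.smul_single, smul_eq_mul, smul_eq_mul, smul_eq_mul, mul_one]
    congr 1
    ring
  · intro hj
    have : cE = 0 := by
      subst hj
      simp [hcE, qint_zero]
    simp [this]

lemma phiPlus_pow (q s t : ℂ) (n : ℕ) : ∀ (k i j : ℕ),
    ∃ a : ℂ, ((phiPlus q s t n) ^ k) (Finsupp.single (i, j) 1)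
      = a • Finsupp.single (i - k, j + k) 1 ∧ (i < k → a = 0) := by
  intro k
  induction k with
  | zero => intro i j; exact ⟨1, by simp, by omega⟩
  | succ k ih =>
    intro i j
    obtain ⟨a, ha, ha0⟩ := phiPlus_single q s t n i j
    obtain ⟨b, hb, hb0⟩ := ih (i - 1) (j + 1)
    refine ⟨a * b, ?_, ?_⟩
    · rw [pow_succ, Module.End.mul_apply, ha, map_smul, hb, smul_smul]
      have e1 : i - 1 - k = i - (k + 1) := by omega
      have e2 : j + 1 + k = j + (k + 1) := by omega
      rw [e1, e2]
    · intro hik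
      rcases Nat.eq_zero_or_pos i with hi | hi
      · rw [ha0 hi, zero_mul]
      · rw [hb0 (by omega), mul_zero]

lemma phiMinus_pow (q s t : ℂ) (n : ℕ) : ∀ (k i j : ℕ),
    ∃ a : ℂ, ((phiMinus q s t n) ^ k) (Finsupp.single (i, j) 1)
      = a • Finsupp.single (i + k, j - k) 1 ∧ (j < k → a = 0) := by
  intro k
  induction k with
  | zero => intro i j; exact ⟨1, by simp, by omega⟩
  | succ k ih =>
    intro i j
    obtain ⟨a, ha, ha0⟩ := phiMinus_single q s t n i j
    obtain ⟨b, hb, hb0⟩ := ih (i + 1) (j - 1)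
    refine ⟨a * b, ?_, ?_⟩
    · rw [pow_succ, Module.End.mul_apply, ha, map_smul, hb, smul_smul]
      have e1 : i + 1 + k = i + (k + 1) := by omega
      have e2 : j - 1 - k = j - (k + 1) := by omega
      rw [e1, e2]
    · intro hjk
      rcases Nat.eq_zero_or_pos j with hj | hj
      · rw [ha0 hj, zero_mul]
      · rw [hb0 (by omega), mul_zero]

/-! ### The plus filtration -/

def SP (i j : ℕ) : Submodule ℂ TensorSpace :=
  Submodule.span ℂ {x : TensorSpace | ∃ n : ℕ, 1 ≤ n ∧ n ≤ i ∧
    x = Finsupp.single (i - n, j + n) (1 : ℂ)}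

lemma single_mem_SP {i j n : ℕ} (h1 : 1 ≤ n) (h2 : n ≤ i) :
    Finsupp.single (i - n, j + n) (1 : ℂ) ∈ SP i j :=
  Submodule.subset_span ⟨n, h1, h2, rfl⟩

lemma SP_le {i j n : ℕ} (h1 : 1 ≤ n) (h2 : n ≤ i) : SP (i - n) (j + n) ≤ SP i j := by
  rw [SP, Submodule.span_le]
  rintro x ⟨k, hk1, hk2, rfl⟩
  have e1 : i - n - k = i - (n + k) := by omega
  have e2 : j + n + k = j + (n + k) := by omega
  rw [e1, e2]
  exact single_mem_SP (by omega) (by omega)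

def plusB (d : ℕ) (T : Module.End ℂ TensorSpace) : Prop :=
  ∀ i j : ℕ, T (Finsupp.single (i, j) 1)
    - (if d = 0 then Finsupp.single (i, j) 1 else 0) ∈ SP i j

lemma plusB_map {d : ℕ} {T : Module.End ℂ TensorSpace} (h : plusB d T) (i j : ℕ) :
    ∀ x ∈ SP i j, T x ∈ SP i j := by
  intro x hx
  refine Submodule.span_induction ?_ (by simp) ?_ ?_ hx
  · rintro y ⟨n, hn1, hn2, rfl⟩
    have hy := h (i - n) (j + n)
    have hmem : (if d = 0 then Finsupp.single (i - n, j + n) (1 : ℂ) else 0) ∈ SP i j := by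
      split
      · exact single_mem_SP hn1 hn2
      · exact Submodule.zero_mem _
    have := Submodule.add_mem _ (SP_le hn1 hn2 hy) hmem
    rwa [sub_add_cancel] at this
  · intro u v _ _ hu hv
    rw [map_add]; exact Submodule.add_mem _ hu hv
  · intro a u _ hu
    rw [map_smul]; exact Submodule.smul_mem _ _ hu

lemma plusB_mul {a b : ℕ} {T T' : Module.End ℂ TensorSpace}
    (hT : plusB a T) (hT' : plusB b T') : plusB (a + b) (T * T') := by
  intro i j
  have h1 := hT' i j
  have h2 := hT i j
  rw [Module.End.mul_apply]
  have hy : T (T' (Finsupp.single (i, j) 1)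
      - (if b = 0 then Finsupp.single (i, j) 1 else 0)) ∈ SP i j :=
    plusB_map hT i j _ h1
  have hsub : T (T' (Finsupp.single (i, j) 1))
        - (if a + b = 0 then Finsupp.single (i, j) 1 else 0)
      = T (T' (Finsupp.single (i, j) 1) - (if b = 0 then Finsupp.single (i, j) 1 else 0))
        + (T (if b = 0 then Finsupp.single (i, j) 1 else 0)
          - (if a + b = 0 then Finsupp.single (i, j) 1 else 0)) := by
    rw [map_sub]
    abel
  rw [hsub]
  refine Submodule.add_mem _ hy ?_
  by_cases hb : b = 0
  · rw [if_pos hb]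
    by_cases ha : a = 0
    · rw [if_pos (by omega)]
      rw [if_pos ha] at h2
      exact h2
    · rw [if_neg (by omega), sub_zero]
      rw [if_neg ha, sub_zero] at h2
      exact h2
  · rw [if_neg hb, map_zero, if_neg (by omega), sub_zero]
    exact Submodule.zero_mem _

def plusGood (F : PowerSeries (Module.End ℂ TensorSpace)) : Prop :=
  ∀ d : ℕ, plusB d (PowerSeries.coeff d F)

lemma plusGood_one : plusGood 1 := by
  intro d i j
  rcases eq_or_ne d 0 with rfl | hd
  · simp [PowerSeries.coeff_one, SP]
  · simp [PowerSeries.coeff_one, hd, SP]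

lemma plusGood_mul {F G : PowerSeries (Module.End ℂ TensorSpace)}
    (hF : plusGood F) (hG : plusGood G) : plusGood (F * G) := by
  intro d i j
  rw [PowerSeries.coeff_mul, LinearMap.sum_apply]
  rcases eq_or_ne d 0 with rfl | hd
  · rw [Finset.Nat.antidiagonal_zero, Finset.sum_singleton]
    exact plusB_mul (hF 0) (hG 0) i j
  · rw [if_neg hd, sub_zero]
    refine Submodule.sum_mem _ ?_
    intro p hp
    have hpd : p.1 + p.2 = d := Finset.HasAntidiagonal.mem_antidiagonal.mp hp
    have := plusB_mul (hF p.1) (hG p.2) i j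
    rw [if_neg (by omega), sub_zero] at this
    exact this

lemma plusGood_prod : ∀ L : List (PowerSeries (Module.End ℂ TensorSpace)),
    (∀ F ∈ L, plusGood F) → plusGood L.prod := by
  intro L
  induction L with
  | nil => intro _; simpa using plusGood_one
  | cons F L ih =>
    intro h
    rw [List.prod_cons]
    exact plusGood_mul (h F (by simp)) (ih fun G hG => h G (by simp [hG]))

lemma plusB_smul_pow (q s t : ℂ) (c : ℂ) (n k : ℕ) (hk : 1 ≤ k) :
    plusB 1 (c • (phiPlus q s t n) ^ k) := by
  intro i j
  rw [if_neg (by omega), sub_zero, LinearMap.smul_apply]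
  obtain ⟨a, ha, ha0⟩ := phiPlus_pow q s t n k i j
  rw [ha]
  rcases le_or_gt k i with hki | hki
  · exact Submodule.smul_mem _ _ (Submodule.smul_mem _ _ (single_mem_SP hk hki))
  · rw [ha0 hki, zero_smul, smul_zero]
    exact Submodule.zero_mem _

lemma plusB_expFactorZero (q s t : ℂ) : plusB 0 (expFactorZero q s t) := by
  intro i j
  have happ : expFactorZero q s t (Finsupp.single (i, j) 1)
      = (∑ m ∈ Finset.range (i + 1),
          ((pfact ((q ^ 2)⁻¹) m)⁻¹ * (q - q⁻¹) ^ m) • (phiPlus q s t 0) ^ m)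
        (Finsupp.single (i, j) 1) := by
    simp [expFactorZero, Finsupp.lsum_single, LinearMap.toSpanSingleton_apply]
  rw [if_pos rfl, happ, LinearMap.sum_apply, Finset.sum_range_succ']
  have h0 : (((pfact ((q ^ 2)⁻¹) 0)⁻¹ * (q - q⁻¹) ^ 0) • (phiPlus q s t 0) ^ 0)
      (Finsupp.single (i, j) 1) = Finsupp.single (i, j) 1 := by
    simp [pfact]
  rw [h0, add_sub_cancel_right]
  refine Submodule.sum_mem _ ?_
  intro m hm
  have hmi : m + 1 ≤ i := by
    have := Finset.mem_range.mp hm; omega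
  have := plusB_smul_pow q s t ((pfact ((q ^ 2)⁻¹) (m + 1))⁻¹ * (q - q⁻¹) ^ (m + 1))
    0 (m + 1) (by omega) i j
  rw [if_neg (by omega), sub_zero] at this
  exact this

lemma plusB_id (d : ℕ) (hd : d = 0) : plusB d (1 : Module.End ℂ TensorSpace) := by
  intro i j
  subst hd
  simp [SP]

lemma plusGood_factor (q s t : ℂ) (n : ℕ) : plusGood (factorPlus q s t n) := by
  intro d
  rcases eq_or_ne n 0 with rfl | hn
  · rw [factorPlus, if_pos rfl]
    rcases eq_or_ne d 0 with rfl | hd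
    · rw [PowerSeries.coeff_zero_C]
      exact plusB_expFactorZero q s t
    · rw [PowerSeries.coeff_C, if_neg hd]
      intro i j
      rw [if_neg hd, sub_zero, LinearMap.zero_apply]
      exact Submodule.zero_mem _
  · rw [factorPlus, if_neg hn, PowerSeries.coeff_mk]
    rcases eq_or_ne d 0 with rfl | hd
    · rw [if_pos (dvd_zero n), Nat.zero_div]
      have : ((pfact ((q ^ 2)⁻¹) 0)⁻¹ * (q - q⁻¹) ^ 0) • (phiPlus q s t n) ^ 0
          = (1 : Module.End ℂ TensorSpace) := by
        simp [pfact]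
      rw [this]
      exact plusB_id 0 rfl
    · split
      · rename_i hdvd
        have hk : 1 ≤ d / n := Nat.div_pos (Nat.le_of_dvd (by omega) hdvd) (by omega)
        intro i j
        have := plusB_smul_pow q s t ((pfact ((q ^ 2)⁻¹) (d / n))⁻¹ * (q - q⁻¹) ^ (d / n))
          n (d / n) hk i j
        rw [if_neg (by omega), sub_zero] at this
        rw [if_neg hd, sub_zero]
        exact this
      · intro i j
        rw [if_neg hd, sub_zero, LinearMap.zero_apply]
        exact Submodule.zero_mem _

/-! ### The minus filtration -/

def SM (i j m : ℕ) : Submodule ℂ TensorSpace :=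
  Submodule.span ℂ {x : TensorSpace | ∃ n : ℕ, 1 ≤ n ∧ n ≤ j ∧ n ≤ m ∧
    x = Finsupp.single (i + n, j - n) (1 : ℂ)}

lemma single_mem_SM {i j m n : ℕ} (h1 : 1 ≤ n) (h2 : n ≤ j) (h3 : n ≤ m) :
    Finsupp.single (i + n, j - n) (1 : ℂ) ∈ SM i j m :=
  Submodule.subset_span ⟨n, h1, h2, h3, rfl⟩

lemma SM_mono {i j m m' : ℕ} (h : m ≤ m') : SM i j m ≤ SM i j m' := by
  rw [SM, Submodule.span_le]
  rintro x ⟨k, hk1, hk2, hk3, rfl⟩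
  exact single_mem_SM hk1 hk2 (by omega)

lemma SM_le {i j a b n : ℕ} (h1 : 1 ≤ n) (h2 : n ≤ j) (h3 : n ≤ b) :
    SM (i + n) (j - n) a ≤ SM i j (a + b) := by
  rw [SM, Submodule.span_le]
  rintro x ⟨k, hk1, hk2, hk3, rfl⟩
  have e1 : i + n + k = i + (n + k) := by omega
  have e2 : j - n - k = j - (n + k) := by omega
  rw [e1, e2]
  exact single_mem_SM (by omega) (by omega) (by omega)

def minB (d : ℕ) (T : Module.End ℂ TensorSpace) : Prop :=
  ∀ i j : ℕ, T (Finsupp.single (i, j) 1)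
    - (if d = 0 then Finsupp.single (i, j) 1 else 0) ∈ SM i j d

lemma minB_map {a : ℕ} {T : Module.End ℂ TensorSpace} (h : minB a T) (i j b : ℕ) :
    ∀ x ∈ SM i j b, T x ∈ SM i j (a + b) := by
  intro x hx
  refine Submodule.span_induction ?_ (by simp) ?_ ?_ hx
  · rintro y ⟨n, hn1, hn2, hn3, rfl⟩
    have hy := h (i + n) (j - n)
    have hmem : (if a = 0 then Finsupp.single (i + n, j - n) (1 : ℂ) else 0)
        ∈ SM i j (a + b) := by
      split
      · exact single_mem_SM hn1 hn2 (by omega)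
      · exact Submodule.zero_mem _
    have := Submodule.add_mem _ (SM_le hn1 hn2 hn3 hy) hmem
    rwa [sub_add_cancel] at this
  · intro u v _ _ hu hv
    rw [map_add]; exact Submodule.add_mem _ hu hv
  · intro c u _ hu
    rw [map_smul]; exact Submodule.smul_mem _ _ hu

lemma minB_mul {a b : ℕ} {T T' : Module.End ℂ TensorSpace}
    (hT : minB a T) (hT' : minB b T') : minB (a + b) (T * T') := by
  intro i j
  have h1 := hT' i j
  have h2 := hT i j
  rw [Module.End.mul_apply]
  have hy : T (T' (Finsupp.single (i, j) 1)
      - (if b = 0 then Finsupp.single (i, j) 1 else 0)) ∈ SM i j (a + b) :=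
    minB_map hT i j b _ h1
  have hsub : T (T' (Finsupp.single (i, j) 1))
        - (if a + b = 0 then Finsupp.single (i, j) 1 else 0)
      = T (T' (Finsupp.single (i, j) 1) - (if b = 0 then Finsupp.single (i, j) 1 else 0))
        + (T (if b = 0 then Finsupp.single (i, j) 1 else 0)
          - (if a + b = 0 then Finsupp.single (i, j) 1 else 0)) := by
    rw [map_sub]
    abel
  rw [hsub]
  refine Submodule.add_mem _ hy ?_
  by_cases hb : b = 0
  · rw [if_pos hb]
    by_cases ha : a = 0
    · rw [if_pos (by omega)]
      rw [if_pos ha] at h2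
      exact SM_mono (by omega) h2
    · rw [if_neg (by omega), sub_zero]
      rw [if_neg ha, sub_zero] at h2
      exact SM_mono (by omega) h2
  · rw [if_neg hb, map_zero, if_neg (by omega), sub_zero]
    exact Submodule.zero_mem _

def minGood (F : PowerSeries (Module.End ℂ TensorSpace)) : Prop :=
  ∀ d : ℕ, minB d (PowerSeries.coeff d F)

lemma minB_one : minB 0 (1 : Module.End ℂ TensorSpace) := by
  intro i j
  rw [if_pos rfl, Module.End.one_apply, sub_self]
  exact Submodule.zero_mem _

lemma minGood_one : minGood 1 := by
  intro d i j
  rcases eq_or_ne d 0 with rfl | hd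
  · simp [PowerSeries.coeff_one]
  · simp [PowerSeries.coeff_one, hd]

lemma minGood_mul {F G : PowerSeries (Module.End ℂ TensorSpace)}
    (hF : minGood F) (hG : minGood G) : minGood (F * G) := by
  intro d i j
  rw [PowerSeries.coeff_mul, LinearMap.sum_apply]
  rcases eq_or_ne d 0 with rfl | hd
  · rw [Finset.Nat.antidiagonal_zero, Finset.sum_singleton]
    exact minB_mul (hF 0) (hG 0) i j
  · rw [if_neg hd, sub_zero]
    refine Submodule.sum_mem _ ?_
    intro p hp
    have hpd : p.1 + p.2 = d := Finset.HasAntidiagonal.mem_antidiagonal.mp hp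
    have := minB_mul (hF p.1) (hG p.2) i j
    rw [if_neg (by omega), sub_zero, hpd] at this
    exact this

lemma minGood_prod : ∀ L : List (PowerSeries (Module.End ℂ TensorSpace)),
    (∀ F ∈ L, minGood F) → minGood L.prod := by
  intro L
  induction L with
  | nil => intro _; simpa using minGood_one
  | cons F L ih =>
    intro h
    rw [List.prod_cons]
    exact minGood_mul (h F (by simp)) (ih fun G hG => h G (by simp [hG]))

lemma minGood_factor (q s t : ℂ) (n : ℕ) : minGood (factorMinus q s t n) := by
  intro d
  rw [factorMinus, PowerSeries.coeff_mk]
  rcases eq_or_ne d 0 with rfl | hd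
  · rw [if_pos (dvd_zero n), Nat.zero_div]
    have : ((pfact ((q ^ 2)⁻¹) 0)⁻¹ * (q - q⁻¹) ^ 0) • (phiMinus q s t n) ^ 0
        = (1 : Module.End ℂ TensorSpace) := by
      simp [pfact]
    rw [this]
    exact minB_one
  · split
    · rename_i hdvd
      have hn : n ≠ 0 := by
        rintro rfl
        exact hd (Nat.eq_zero_of_zero_dvd hdvd)
      have hk1 : 1 ≤ d / n := Nat.div_pos (Nat.le_of_dvd (by omega) hdvd) (by omega)
      have hkd : d / n ≤ d := Nat.div_le_self d n
      intro i j
      rw [if_neg hd, sub_zero, LinearMap.smul_apply]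
      obtain ⟨a, ha, ha0⟩ := phiMinus_pow q s t n (d / n) i j
      rw [ha]
      rcases le_or_gt (d / n) j with hkj | hkj
      · exact Submodule.smul_mem _ _ (Submodule.smul_mem _ _ (single_mem_SM hk1 hkj hkd))
      · rw [ha0 hkj, zero_smul, smul_zero]
        exact Submodule.zero_mem _
    · intro i j
      rw [if_neg hd, sub_zero, LinearMap.zero_apply]
      exact Submodule.zero_mem _

end Aux

/-- Triangularity of the Gauss factors of the trigonometric R-matrix on
`M_s ⊗ M_t` (Theorem 1 and its Corollary for `U_q(ŝl₂)` on evaluation Verma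
modules): (i) every `z`-coefficient of `R⁺_{s,t}(z)(v_i ⊗ w_j) − v_i ⊗ w_j` lies
in the span of `v_{i−n} ⊗ w_{j+n}`, `1 ≤ n ≤ i`; (ii) the `z^m`-coefficient of
`R⁻_{s,t}(z)(v_i ⊗ w_j) − v_i ⊗ w_j` lies in the span of `v_{i+n} ⊗ w_{j−n}`,
`1 ≤ n ≤ min j m` (the component with shift `n` has `z`-order `≥ n`); in
particular both are unipotent with all matrix coefficients formal power series
at `z = 0`; (iii) `D_{s,t}(z)` is diagonal. -/
theorem gauss_decomposition_triangular (q s t : ℂ) (hq : q ≠ 0)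
    (hroot : ∀ n : ℕ, 0 < n → q ^ n ≠ 1) (hs : s ≠ 0) (ht : t ≠ 0) :
    (∀ (i j m : ℕ),
      (PowerSeries.coeff m (rPlus q s t))
          (Finsupp.single (i, j) 1)
        - (if m = 0 then Finsupp.single (i, j) 1 else 0)
        ∈ Submodule.span ℂ
            {x : TensorSpace | ∃ n : ℕ, 1 ≤ n ∧ n ≤ i ∧
              x = Finsupp.single (i - n, j + n) (1 : ℂ)}) ∧
    (∀ (i j m : ℕ),
      (PowerSeries.coeff m (rMinus q s t))
          (Finsupp.single (i, j) 1)
        - (if m = 0 then Finsupp.single (i, j) 1 else 0)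
        ∈ Submodule.span ℂ
            {x : TensorSpace | ∃ n : ℕ, 1 ≤ n ∧ n ≤ j ∧ n ≤ m ∧
              x = Finsupp.single (i + n, j - n) (1 : ℂ)}) ∧
    (∀ (i j m : ℕ), ∃ c : ℂ,
      (PowerSeries.coeff m (dMat q s t))
          (Finsupp.single (i, j) 1)
        = c • Finsupp.single (i, j) 1) := by
  refine ⟨?_, ?_, ?_⟩
  · intro i j m
    have hL : plusGood (((List.range (m + 1)).map (factorPlus q s t)).prod) := by
      refine plusGood_prod _ ?_
      intro F hF
      obtain ⟨k, _, rfl⟩ := List.mem_map.mp hF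
      exact plusGood_factor q s t k
    have h := hL m i j
    simp only [rPlus, PowerSeries.coeff_mk]
    exact h
  · intro i j m
    have hL : minGood ((((List.range (m + 1)).map
        fun i => factorMinus q s t (i + 1)).reverse).prod) := by
      refine minGood_prod _ ?_
      intro F hF
      rw [List.mem_reverse] at hF
      obtain ⟨k, _, rfl⟩ := List.mem_map.mp hF
      exact minGood_factor q s t (k + 1)
    have h := hL m i j
    simp only [rMinus, PowerSeries.coeff_mk]
    exact h
  · intro i j m
    refine ⟨PowerSeries.coeff m (dEntry q s t i j), ?_⟩
    simp only [dMat, PowerSeries.coeff_mk]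
    simp [Finsupp.lsum_single, LinearMap.toSpanSingleton_apply]
end
end
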